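/- arXiv:2403.03110 — 15 statements merged into one kernel-verified Lean document; each statement's English description precedes it below -/
import Mathlib

section
/- Let κ and λ be cardinals with ℵ₁ ≤ κ ≤ λ ≤ 𝔠. Suppose there exist a separable metric space X of cardinality λ, a metric space Y, and a continuous function f : X → Y which is not uniformly continuous on any subset of X of cardinality κ. Then there exist a Polish space Z and a subset T ⊆ Z of cardinality λ such that |T ∩ K| < κ for every compact set K ⊆ Z. -/
open Cardinal

/-- If there exist a separable metric space `X` of cardinality `lam`, a metric space `Y`,
and a continuous `f : X → Y` not uniformly continuous on any subset of `X` of cardinality `κ`,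
then there is a Polish space `Z` and a `κ`-K-Lusin set `T ⊆ Z` of cardinality `lam`. -/
theorem stmt_0 (κ lam : Cardinal.{0}) (hκ : aleph 1 ≤ κ) (hkl : κ ≤ lam)
    (hlc : lam ≤ continuum)
    (h : ∃ (X : Type) (_ : MetricSpace X) (_ : TopologicalSpace.SeparableSpace X)
        (Y : Type) (_ : MetricSpace Y) (f : X → Y),
        #X = lam ∧ Continuous f ∧
        ∀ A : Set X, #A = κ → ¬ UniformContinuousOn f A) :
    ∃ (Z : Type) (_ : MetricSpace Z) (_ : PolishSpace Z) (T : Set Z),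
      #T = lam ∧ ∀ K : Set Z, IsCompact K → #(↥(T ∩ K)) < κ := by
  obtain ⟨X, _, _, Y, _, f, hcard, hf, hnu⟩ := h
  -- an injection of X into ℝ
  have hXR : #X ≤ #ℝ := by rw [hcard, Cardinal.mk_real]; exact hlc
  obtain ⟨ι⟩ := (Cardinal.le_def X ℝ).1 hXR
  -- moduli of continuity
  have hdel : ∀ (x : X) (n : ℕ), ∃ δ : ℝ, 0 < δ ∧
      ∀ y, dist y x < δ → dist (f y) (f x) < 1 / (n + 1) := by
    intro x n
    have := Metric.continuousAt_iff.1 (hf.continuousAt (x := x)) (1 / (n + 1))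
      (by positivity)
    obtain ⟨δ, hδ, hd⟩ := this
    exact ⟨δ, hδ, fun y hy => hd hy⟩
  set g : X → ℕ → ℝ := fun x n => Classical.choose (hdel x n) with hg
  have hgpos : ∀ x n, 0 < g x n := fun x n => (Classical.choose_spec (hdel x n)).1
  have hgspec : ∀ x n y, dist y x < g x n → dist (f y) (f x) < 1 / (n + 1) :=
    fun x n => (Classical.choose_spec (hdel x n)).2
  letI : MetricSpace (ℕ → ℝ) := PiCountable.metricSpace
  haveI : PolishSpace (ℕ → ℝ) := inferInstanceAs (PolishSpace (∀ _ : ℕ, ℝ))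
  set Φ : X → (ℕ → ℝ) := fun x n => Nat.casesOn n (ι x) (fun m => (g x m)⁻¹) with hΦ
  have hΦinj : Function.Injective Φ := by
    intro a b hab
    have : Φ a 0 = Φ b 0 := by rw [hab]
    exact ι.injective this
  refine ⟨ℕ → ℝ, inferInstance, inferInstance, Set.range Φ, ?_, ?_⟩
  · rw [Cardinal.mk_range_eq Φ hΦinj, hcard]
  · intro K hK
    by_contra hge
    push_neg at hge
    -- the preimage set
    set A : Set X := Φ ⁻¹' K with hA
    have hTK : #(↥(Set.range Φ ∩ K)) ≤ #A := by
      have : Set.range Φ ∩ K ⊆ Φ '' A := by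
        rintro z ⟨⟨x, rfl⟩, hzK⟩
        exact ⟨x, hzK, rfl⟩
      calc #(↥(Set.range Φ ∩ K)) ≤ #(Φ '' A) := Cardinal.mk_le_mk_of_subset this
        _ = #A := Cardinal.mk_image_eq hΦinj
    have hκA : κ ≤ #A := le_trans hge hTK
    obtain ⟨A', hA'sub, hA'card⟩ := Cardinal.le_mk_iff_exists_subset.1 hκA
    have hκpos : (0 : Cardinal) < κ :=
      lt_of_lt_of_le (lt_of_lt_of_le Cardinal.aleph0_pos (aleph0_le_aleph 1)) hκ
    have hA'ne : A'.Nonempty := by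
      rw [Set.nonempty_iff_ne_empty]
      rintro rfl
      rw [Cardinal.mk_emptyCollection] at hA'card
      exact hκpos.ne' hA'card.symm
    refine hnu A' hA'card ?_
    rw [Metric.uniformContinuousOn_iff]
    intro ε hε
    obtain ⟨n, hn⟩ := exists_nat_one_div_lt hε
    -- bound the (n+1)-st coordinate on K
    have hcomp : IsCompact ((fun z : ℕ → ℝ => z (n + 1)) '' K) :=
      hK.image (continuous_apply (n + 1))
    obtain ⟨M, hM⟩ := hcomp.bddAbove
    have hMb : ∀ x ∈ A', (g x n)⁻¹ ≤ M := by
      intro x hx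
      have : Φ x (n + 1) ∈ (fun z : ℕ → ℝ => z (n + 1)) '' K := ⟨Φ x, hA'sub hx, rfl⟩
      exact hM this
    obtain ⟨x₀, hx₀⟩ := hA'ne
    have hMpos : 0 < M := lt_of_lt_of_le (inv_pos.2 (hgpos x₀ n)) (hMb x₀ hx₀)
    refine ⟨M⁻¹, inv_pos.2 hMpos, ?_⟩
    intro x hx y hy hxy
    have hMg : M⁻¹ ≤ g x n := by
      have h1 : M⁻¹ ≤ ((g x n)⁻¹)⁻¹ :=
        inv_anti₀ (inv_pos.2 (hgpos x n)) (hMb x hx)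
      rwa [inv_inv] at h1
    calc dist (f x) (f y) = dist (f y) (f x) := dist_comm _ _
      _ < 1 / (n + 1) := hgspec x n y (lt_of_lt_of_le (by rwa [dist_comm] at hxy) hMg)
      _ < ε := hn
end

section
/- For any uncountable cardinals κ ≤ λ ≤ 𝔠 the following are equivalent: (1) C_9(λ,κ) holds; (2) there exist a set E ⊆ ℝ of cardinality λ, a Polish space Y which is not σ-compact, and a continuous function f : E → Y such that for every complete metric d on Y compatible with its topology and every subset A ⊆ E of cardinality κ, the restriction of f to A is not uniformly continuous with respect to d. -/
/-!
Given `fₙ → g` pointwise on `E`, choose a modulus of convergence `φ : E → ℕ^ℕ`; then `fₙ`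
converges uniformly on every set on which `φ` is bounded. Pairing `φ` coordinatewise with an
injective code of the point makes it injective, and an embedding of `ℕ^ℕ` into the Cantor set
carries `E` to a set `E' ⊆ [0, 1]` on which the decoding map `f : E' → ℕ^ℕ` is continuous.
Every subset `A` of `E'` is totally bounded, so if `f` is uniformly continuous on `A` for a
complete metric, `f '' A` is relatively compact, hence bounded in `ℕ^ℕ`, and `fₙ` converges
uniformly on the corresponding subset of `E`.

Conversely, for a continuous `f : E → Y` the oscillations of `f` at scale `1 / (n + 1)` tend
to `0` pointwise, and if they tend to `0` uniformly on `A` then `f` is uniformly continuous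
on `A`.
-/

open Cardinal Filter

/-- `C_9(lam, κ)`: there exist a set `E ⊆ ℝ` of cardinality `lam` and a sequence of
functions `fₙ : E → ℝ` converging pointwise on `E` but not converging uniformly on any
subset of `E` of cardinality `κ`. -/
def C9 (lam κ : Cardinal.{0}) : Prop :=
  ∃ (E : Set ℝ) (f : ℕ → E → ℝ) (g : E → ℝ),
    #E = lam ∧
    (∀ x : E, Tendsto (fun n => f n x) atTop (nhds (g x))) ∧
    ∀ A : Set E, #A = κ → ¬ TendstoUniformlyOn f g atTop A

open Set Topology Function

theorem IsCompact.bddAbove_pi_nat {ι : Type*} {K : Set (ι → ℕ)} (hK : IsCompact K) :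
    BddAbove K :=
  bddAbove_pi.2 fun i => ((hK.image (continuous_apply i)).finite_of_discrete).bddAbove

theorem not_sigmaCompactSpace_nat_nat : ¬ SigmaCompactSpace (ℕ → ℕ) := by
  intro _
  choose b hb using fun n => (isCompact_compactCovering (ℕ → ℕ) n).bddAbove_pi_nat
  obtain ⟨n, hn⟩ := exists_mem_compactCovering fun k => b k k + 1
  exact (hb n hn n).not_gt (Nat.lt_succ_self _)

theorem isEmbedding_nat_indicator : IsEmbedding fun n : ℕ => fun m : ℕ => decide (m = n) := by
  refine ⟨⟨?_⟩, fun a b hab => by simpa using congrFun hab a⟩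
  refine DiscreteTopology.eq_bot.trans (eq_bot_of_singletons_open fun n => ?_).symm
  exact ⟨(fun b : ℕ → Bool => b n) ⁻¹' {true},
    (isOpen_discrete _).preimage (continuous_apply n), by ext; simp [eq_comm]⟩

theorem exists_isEmbedding_nat_nat_real :
    ∃ j : (ℕ → ℕ) → ℝ, IsEmbedding j ∧ range j ⊆ Icc 0 1 := by
  refine ⟨(↑) ∘ cantorSetHomeomorphNatToBool.symm ∘ cantorSpaceHomeomorphNatToCantorSpace.symm ∘
      Pi.map fun _ => fun n m => decide (m = n), ?_, ?_⟩
  · exact IsEmbedding.subtypeVal.comp <| cantorSetHomeomorphNatToBool.symm.isEmbedding.comp <|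
      cantorSpaceHomeomorphNatToCantorSpace.symm.isEmbedding.comp <|
      IsEmbedding.piMap fun _ => isEmbedding_nat_indicator
  · rintro - ⟨s, rfl⟩
    exact cantorSet_subset_unitInterval (Subtype.prop _)

theorem exists_modulus_of_tendsto {X Z : Type*} [PseudoMetricSpace Z] {F : ℕ → X → Z}
    {G : X → Z} (h : ∀ x, Tendsto (fun n => F n x) atTop (𝓝 (G x))) :
    ∃ φ : X → ℕ → ℕ, ∀ B : Set X, BddAbove (φ '' B) → TendstoUniformlyOn F G atTop B := by
  choose φ hφ using fun x (k : ℕ) =>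
    Metric.tendsto_atTop.1 (h x) (1 / (k + 1)) Nat.one_div_pos_of_nat
  refine ⟨φ, fun B ⟨b, hb⟩ => Metric.tendstoUniformlyOn_iff.2 fun ε hε => ?_⟩
  obtain ⟨k, hk⟩ := exists_nat_one_div_lt hε
  filter_upwards [eventually_ge_atTop (b k)] with n hn x hx
  rw [dist_comm]
  exact (hφ x k n ((hb (mem_image_of_mem φ hx) k).trans hn)).trans hk

theorem isCompact_closure_image_of_uniformContinuousOn {X Y : Type*} [UniformSpace X]
    [UniformSpace Y] [CompleteSpace Y] {f : X → Y} {A : Set X} (hA : TotallyBounded A)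
    (hf : UniformContinuousOn f A) : IsCompact (closure (f '' A)) := by
  have hA' : TotallyBounded (univ : Set A) := by
    rwa [← totallyBounded_image_iff (isUniformInducing_val A), image_univ,
      Subtype.range_coe]
  have := hA'.image (uniformContinuousOn_iff_restrict.1 hf)
  rw [image_univ, range_domRestrict] at this
  exact this.closure.isCompact_of_isComplete isClosed_closure.isComplete

section Oscillation

variable {X Y : Type*} [PseudoMetricSpace X] [PseudoMetricSpace Y]

/-- Truncation at `1` keeps the set bounded, so that `sSup` is not the junk value `0`. -/
noncomputable def truncOscillation (f : X → Y) (n : ℕ) (x : X) : ℝ :=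
  sSup ((fun y => min 1 (dist (f x) (f y))) '' Metric.closedBall x (1 / (n + 1)))

theorem min_one_dist_le_truncOscillation (f : X → Y) {n : ℕ} {x y : X}
    (hy : dist y x ≤ 1 / (n + 1)) : min 1 (dist (f x) (f y)) ≤ truncOscillation f n x :=
  le_csSup ⟨1, forall_mem_image.2 fun _ _ => min_le_left _ _⟩ (mem_image_of_mem _ hy)

theorem truncOscillation_nonneg (f : X → Y) (n : ℕ) (x : X) : 0 ≤ truncOscillation f n x := by
  have := min_one_dist_le_truncOscillation f (n := n) (y := x) (by rw [dist_self]; positivity)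
  rwa [dist_self, min_eq_right zero_le_one] at this

theorem tendsto_truncOscillation {f : X → Y} {x : X} (hf : ContinuousAt f x) :
    Tendsto (fun n => truncOscillation f n x) atTop (𝓝 0) := by
  refine Metric.tendsto_atTop.2 fun ε hε => ?_
  obtain ⟨δ, hδ, hfδ⟩ := Metric.continuousAt_iff.1 hf (ε / 2) (half_pos hε)
  obtain ⟨N, hN⟩ := exists_nat_one_div_lt hδ
  refine ⟨N, fun n hn => ?_⟩
  have hle : truncOscillation f n x ≤ ε / 2 := by
    refine csSup_le ((Metric.nonempty_closedBall.2 (by positivity)).image _) ?_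
    rintro - ⟨y, hy, rfl⟩
    have hyx : dist y x < δ := calc
      dist y x ≤ 1 / (n + 1) := hy
      _ ≤ 1 / (N + 1) := by gcongr
      _ < δ := hN
    exact (min_le_right _ _).trans (dist_comm (f x) (f y) ▸ (hfδ hyx).le)
  rw [Real.dist_0_eq_abs, abs_of_nonneg (truncOscillation_nonneg f n x)]
  linarith

theorem uniformContinuousOn_of_tendstoUniformlyOn_truncOscillation {f : X → Y} {A : Set X}
    (h : TendstoUniformlyOn (truncOscillation f) 0 atTop A) : UniformContinuousOn f A := by
  refine Metric.uniformContinuousOn_iff.2 fun ε hε => ?_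
  obtain ⟨N, hN⟩ := (Metric.tendstoUniformlyOn_iff.1 h (min 1 ε) (lt_min one_pos hε)).exists
  refine ⟨1 / (N + 1), Nat.one_div_pos_of_nat, fun x hx y _ hxy => ?_⟩
  have hlt : min 1 (dist (f x) (f y)) < min 1 ε := by
    have := hN x hx
    rw [Pi.zero_apply, dist_zero_left, Real.norm_of_nonneg (truncOscillation_nonneg f N x)] at this
    exact (min_one_dist_le_truncOscillation f (dist_comm y x ▸ hxy.le)).trans_lt this
  exact lt_of_not_ge fun hge => (min_le_min_left 1 hge).not_gt hlt

end Oscillation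

/-- Condition (2) of the theorem. -/
def C9Polish (lam κ : Cardinal.{0}) : Prop :=
  ∃ (E : Set ℝ) (Y : Type) (tY : TopologicalSpace Y) (f : E → Y),
    #E = lam ∧ @PolishSpace Y tY ∧ ¬ @SigmaCompactSpace Y tY ∧
    @Continuous _ _ _ tY f ∧
    ∀ m : MetricSpace Y, m.toUniformSpace.toTopologicalSpace = tY →
      @CompleteSpace Y m.toUniformSpace →
      ∀ A : Set E, #A = κ → ¬ @UniformContinuousOn _ _ _ m.toUniformSpace f A

theorem C9.c9Polish {lam κ : Cardinal.{0}} (h : C9 lam κ) : C9Polish lam κ := by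
  obtain ⟨E, F, G, hE, hconv, hnon⟩ := h
  obtain ⟨φ, hφ⟩ := exists_modulus_of_tendsto hconv
  obtain ⟨c⟩ : Nonempty (ℝ ↪ (ℕ → ℕ)) := by
    rw [← Cardinal.le_def, mk_real, mk_arrow, mk_nat, lift_id, aleph0_power_aleph0]
  let ψ : E → ℕ → ℕ := fun x k => Nat.pair (φ x k) (c x k)
  have hψ : Injective ψ := fun x y hxy => Subtype.ext <| c.injective <| funext fun k =>
    (Nat.pair_eq_pair.1 (congrFun hxy k)).2
  obtain ⟨j, hj, hj01⟩ := exists_isEmbedding_nat_nat_real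
  let e : E ≃ range (j ∘ ψ) := Equiv.ofInjective _ (hj.injective.comp hψ)
  let f : range (j ∘ ψ) → ℕ → ℕ :=
    hj.toHomeomorph.symm ∘ inclusion (range_comp_subset_range ψ j)
  have hfe : ∀ x, f (e x) = ψ x := fun x => hj.toHomeomorph_symm_apply (ψ x)
  refine ⟨_, ℕ → ℕ, inferInstance, f, (mk_congr e).symm.trans hE, inferInstance,
    not_sigmaCompactSpace_nat_nat, hj.toHomeomorph.symm.continuous.comp (continuous_inclusion _),
    fun m hm hcomplete A hAcard hf =>
      hnon (e.symm '' A) ((mk_image_eq e.symm.injective).trans hAcard) ?_⟩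
  have hAbdd : TotallyBounded A := by
    rw [← totallyBounded_image_iff (isUniformInducing_val _)]
    exact (totallyBounded_Icc 0 1).subset <| (image_subset_range _ _).trans <|
      (Subtype.range_coe).trans_subset <| (range_comp_subset_range ψ j).trans hj01
  have hK := @isCompact_closure_image_of_uniformContinuousOn _ _ _ m.toUniformSpace hcomplete
    f A hAbdd hf
  rw [hm] at hK
  obtain ⟨b, hb⟩ := hK.bddAbove_pi_nat
  refine hφ _ ⟨b, ?_⟩
  rintro - ⟨-, ⟨a, ha, rfl⟩, rfl⟩ k
  calc φ (e.symm a) k ≤ ψ (e.symm a) k := Nat.left_le_pair _ _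
    _ = f a k := by rw [← hfe, e.apply_symm_apply]
    _ ≤ b k := hb (subset_closure (mem_image_of_mem f ha)) k

theorem C9Polish.c9 {lam κ : Cardinal.{0}} (h : C9Polish lam κ) : C9 lam κ := by
  obtain ⟨E, Y, tY, f, hE, hY, -, hf, hnon⟩ := h
  let := TopologicalSpace.upgradeIsCompletelyMetrizable Y
  exact ⟨E, truncOscillation f, 0, hE, fun x => tendsto_truncOscillation hf.continuousAt,
    fun A hAcard hunif => hnon _ rfl inferInstance A hAcard
      (uniformContinuousOn_of_tendstoUniformlyOn_truncOscillation hunif)⟩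

theorem stmt_1_general (κ lam : Cardinal.{0}) :
    C9 lam κ ↔
      ∃ (E : Set ℝ) (Y : Type) (tY : TopologicalSpace Y) (f : E → Y),
        #E = lam ∧ @PolishSpace Y tY ∧ ¬ @SigmaCompactSpace Y tY ∧
        @Continuous _ _ _ tY f ∧
        ∀ m : MetricSpace Y, m.toUniformSpace.toTopologicalSpace = tY →
          @CompleteSpace Y m.toUniformSpace →
          ∀ A : Set E, #A = κ → ¬ @UniformContinuousOn _ _ _ m.toUniformSpace f A :=
  ⟨C9.c9Polish, C9Polish.c9⟩

/-- `C_9(lam,κ)` is equivalent to the existence of a set `E ⊆ ℝ` of cardinality `lam`,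
a non-σ-compact Polish space `Y`, and a continuous `f : E → Y` which is not uniformly
continuous, with respect to any complete metric on `Y` compatible with its topology,
on any subset of `E` of cardinality `κ`. -/
theorem stmt_1 (κ lam : Cardinal.{0}) (hκ : aleph 0 < κ) (hkl : κ ≤ lam)
    (hlc : lam ≤ continuum) :
    C9 lam κ ↔
      ∃ (E : Set ℝ) (Y : Type) (tY : TopologicalSpace Y) (f : E → Y),
        #E = lam ∧ @PolishSpace Y tY ∧ ¬ @SigmaCompactSpace Y tY ∧
        @Continuous _ _ _ tY f ∧
        ∀ m : MetricSpace Y, m.toUniformSpace.toTopologicalSpace = tY →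
          @CompleteSpace Y m.toUniformSpace →
          ∀ A : Set E, #A = κ → ¬ @UniformContinuousOn _ _ _ m.toUniformSpace f A :=
  stmt_1_general κ lam
end

section
/- Let κ ≤ λ ≤ 𝔠 be uncountable cardinals, let P be the set of irrational numbers in [0,1], and let E ⊆ P be a set of cardinality λ such that |E ∩ K| < κ for every compact set K ⊆ P. Let Y be a Polish space which is not σ-compact and let h : P → Y be a homeomorphic embedding of P onto a closed subset of Y. Then for every complete metric d on Y compatible with its topology and every subset A ⊆ E of cardinality κ, the restriction of h to A is not uniformly continuous with respect to d. -/
/-!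
Every subset `A` of `P ⊆ [0,1]` is totally bounded, so if `h` is uniformly continuous on `A`
then `h '' A` is totally bounded and its closure is compact in the complete space `Y`. Since `h`
is a closed embedding, `h ⁻¹' closure (h '' A)` is a compact subset of `P` containing `A`, hence
it meets `E` in at least `#A = κ` points, contradicting the Lusin property of `E`.
-/

open Cardinal

/-- The set of irrational numbers in the unit interval `[0,1]`. -/
def IrrP : Set ℝ := {x | x ∈ Set.Icc (0 : ℝ) 1 ∧ Irrational x}

open Set

section UniformSpace

variable {α β : Type*} [UniformSpace α] [UniformSpace β]

theorem TotallyBounded.image_of_uniformContinuousOn {f : α → β} {s : Set α}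
    (hs : TotallyBounded s) (hf : UniformContinuousOn f s) : TotallyBounded (f '' s) := by
  have hs' : TotallyBounded (univ : Set s) :=
    (totallyBounded_image_iff (isUniformInducing_val s)).1 <| by
      rwa [image_univ, Subtype.range_coe]
  simpa only [image_univ, range_domRestrict] using
    hs'.image (uniformContinuousOn_iff_restrict.1 hf)

theorem Topology.IsClosedEmbedding.isCompact_preimage_closure_image [CompleteSpace β]
    {h : α → β} (hh : IsClosedEmbedding h) {s : Set α} (hs : TotallyBounded s)
    (hf : UniformContinuousOn h s) : IsCompact (h ⁻¹' closure (h '' s)) :=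
  hh.isCompact_preimage <|
    (hs.image_of_uniformContinuousOn hf).closure.isCompact_of_isClosed isClosed_closure

end UniformSpace

theorem totallyBounded_irrP (s : Set IrrP) : TotallyBounded s :=
  (totallyBounded_image_iff (isUniformInducing_val IrrP)).1 <|
    isCompact_Icc.totallyBounded.subset <| by
      rintro _ ⟨x, -, rfl⟩
      exact x.2.1

theorem stmt_2_general (κ : Cardinal.{0})
    (E : Set IrrP)
    (hLusin : ∀ K : Set IrrP, IsCompact K → #(↥(E ∩ K)) < κ)
    (Y : Type) (tY : TopologicalSpace Y)
    (h : IrrP → Y) (hemb : @Topology.IsClosedEmbedding _ _ _ tY h) :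
    ∀ m : MetricSpace Y, m.toUniformSpace.toTopologicalSpace = tY →
      @CompleteSpace Y m.toUniformSpace →
      ∀ A : Set IrrP, A ⊆ E → #A = κ →
        ¬ @UniformContinuousOn _ _ _ m.toUniformSpace h A := by
  intro m htop _ A hAE hA hUC
  subst htop
  have hK := hemb.isCompact_preimage_closure_image (totallyBounded_irrP A) hUC
  have hAK : A ⊆ E ∩ h ⁻¹' closure (h '' A) := fun x hx =>
    ⟨hAE hx, subset_closure (mem_image_of_mem h hx)⟩
  exact ((mk_le_mk_of_subset hAK).trans_lt (hLusin _ hK)).ne hA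

/-- Any `κ`-K-Lusin set `E` of cardinality `lam` in the irrationals `P` of `[0,1]` witnesses,
via any closed embedding `h` of `P` into a non-σ-compact Polish space `Y`, that `h` is not
uniformly continuous (for any compatible complete metric on `Y`) on any subset of `E`
of cardinality `κ`. -/
theorem stmt_2 (κ lam : Cardinal.{0}) (hκ : aleph 0 < κ) (hkl : κ ≤ lam)
    (hlc : lam ≤ continuum)
    (E : Set IrrP) (hE : #E = lam)
    (hLusin : ∀ K : Set IrrP, IsCompact K → #(↥(E ∩ K)) < κ)
    (Y : Type) (tY : TopologicalSpace Y) (hPolish : @PolishSpace Y tY)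
    (hNotSigma : ¬ @SigmaCompactSpace Y tY)
    (h : IrrP → Y) (hemb : @Topology.IsClosedEmbedding _ _ _ tY h) :
    ∀ m : MetricSpace Y, m.toUniformSpace.toTopologicalSpace = tY →
      @CompleteSpace Y m.toUniformSpace →
      ∀ A : Set IrrP, A ⊆ E → #A = κ →
        ¬ @UniformContinuousOn _ _ _ m.toUniformSpace h A :=
  stmt_2_general κ E hLusin Y tY h hemb
end

section
/- Let κ be an uncountable cardinal, let X be a compact metric space, and let E ⊆ X be a subset which, with the subspace topology, is zero-dimensional. Suppose there exist a compact metric space Y and a continuous function h : E → Y which is not uniformly continuous on any subset of E of cardinality κ. Then there exists a continuous function f : E → ℝ, taking values in the Cantor ternary set {∑_{i=0}^∞ u_i/3^{i+1} : each u_i ∈ {0,2}}, which is not uniformly continuous on any subset of E of cardinality κ. -/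
open Cardinal

/-- The Cantor ternary set: all sums `∑ uᵢ/3^(i+1)` with each `uᵢ ∈ {0, 2}`. -/
def cantorTernarySet : Set ℝ :=
  {x | ∃ u : ℕ → ℝ, (∀ i, u i = 0 ∨ u i = 2) ∧ x = ∑' i, u i / 3 ^ (i + 1)}

/-!
Let `(yₙ)` be dense in `Y`. The map `z ↦ (dist z yₙ)ₙ` is a continuous injection of the compact
space `Y` into `ℕ → ℝ`, hence a uniform embedding, so `h` is uniformly continuous on `A` as soon
as every `gₙ = dist (h ·) yₙ` is. As `E` is zero-dimensional and Lindelöf, for all rationals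
`a < b` some clopen set separates `{gₙ ≤ a}` from `{gₙ ≥ b}`; enumerate these sets as `(V k)` and
put `f x = ∑ₖ 2 [x ∈ V k] / 3^(k+1)`. The digit map from `ℕ → Bool` onto the Cantor set is again
a continuous injection of a compact space, so if `f` is uniformly continuous on `A`, then membership
in each `V k` is uniformly locally constant on `A`, and this makes each `gₙ` uniformly continuous
on `A`.
-/

open Set Filter Topology TopologicalSpace Uniformity

theorem cantorSet_subset_cantorTernarySet : cantorSet ⊆ cantorTernarySet := by
  rw [cantorSet_eq_zero_two_ofDigits]
  rintro _ ⟨a, ha, rfl⟩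
  have zero_or_two : ∀ d : Fin 3, d ≠ 1 → ((d : ℕ) : ℝ) = 0 ∨ ((d : ℕ) : ℝ) = 2 := by
    intro d; fin_cases d <;> simp
  refine ⟨fun i => (a i : ℝ), fun i => zero_or_two _ (ha i), ?_⟩
  simp [Real.ofDigits, Real.ofDigitsTerm, div_eq_mul_inv]

theorem Continuous.isUniformInducing_of_injective {K Z : Type*} [UniformSpace K] [CompactSpace K]
    [UniformSpace Z] [T2Space Z] {φ : K → Z} (hφ : Continuous φ) (hinj : Function.Injective φ) :
    IsUniformInducing φ :=
  isUniformInducing_iff_uniformSpace.2 <| unique_uniformity_of_compact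
    (by
      rw [UniformSpace.toTopologicalSpace_comap]
      exact (hφ.isClosedEmbedding hinj).eq_induced.symm)
    rfl

theorem injective_dist_of_denseRange {Y ι : Type*} [MetricSpace Y] {y : ι → Y}
    (hy : DenseRange y) :
    Function.Injective fun z i => dist z (y i) := by
  intro z w hzw
  refine eq_of_forall_dist_le fun ε hε => ?_
  obtain ⟨i, hi⟩ := hy.exists_dist_lt z (half_pos hε)
  have hw : dist w (y i) = dist z (y i) := (congrFun hzw i).symm
  calc dist z w ≤ dist z (y i) + dist w (y i) := dist_triangle_right z w (y i)
    _ ≤ ε := by rw [hw]; linarith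

theorem eventually_mem_iff_of_uniformContinuous_boolIndicator {α : Type*} [UniformSpace α]
    {s : Set α} (hs : UniformContinuous s.boolIndicator) :
    ∀ᶠ p in 𝓤 α, (p.1 ∈ s ↔ p.2 ∈ s) := by
  have := hs (show SetRel.id ∈ 𝓤 Bool from ?_)
  · filter_upwards [this] with p hp
    simpa [Set.boolIndicator] using hp
  · rw [DiscreteUniformity.eq_principal_setRelId]; exact mem_principal_self _

section ClopenSeparation

variable {α : Type*} [TopologicalSpace α] {C D : Set α}

theorem exists_isClopen_of_clopen_cover {W : ℕ → Set α} (hW : ∀ n, IsClopen (W n))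
    (hcov : ∀ x, ∃ n, x ∈ W n) (hsep : ∀ n, Disjoint (W n) C ∨ Disjoint (W n) D) :
    ∃ U, IsClopen U ∧ C ⊆ U ∧ Disjoint U D := by
  classical
  -- The first index `N x` with `x ∈ W (N x)` is locally constant, so every union of its fibres
  -- is clopen.
  let N : α → ℕ := fun x => Nat.find (hcov x)
  have hNW : ∀ x, x ∈ W (N x) := fun x => Nat.find_spec (hcov x)
  have hN : Continuous N := continuous_discrete_rng.2 fun k => by
    have : N ⁻¹' {k} = W k ∩ ⋂ m ∈ Finset.range k, (W m)ᶜ := by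
      ext x; simp [N, Nat.find_eq_iff]
    rw [this]
    exact (hW k).isOpen.inter (isOpen_biInter_finset fun m _ => (hW m).isClosed.isOpen_compl)
  refine ⟨N ⁻¹' {n | Disjoint (W n) D}, (isClopen_discrete _).preimage hN, fun x hxC => ?_,
    disjoint_left.2 fun x hx hxD => disjoint_left.1 hx (hNW x) hxD⟩
  exact (hsep (N x)).resolve_left fun h => disjoint_left.1 h (hNW x) hxC

theorem TopologicalSpace.IsTopologicalBasis.exists_isClopen_of_disjoint
    [SecondCountableTopology α] {B : Set (Set α)} (hBc : ∀ s ∈ B, IsClopen s)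
    (hB : IsTopologicalBasis B) (hC : IsClosed C) (hD : IsClosed D) (hCD : Disjoint C D) :
    ∃ U, IsClopen U ∧ C ⊆ U ∧ Disjoint U D := by
  rcases isEmpty_or_nonempty α with hα | hα
  · exact ⟨Set.univ, isClopen_univ, subset_univ C, by simp [D.eq_empty_of_isEmpty]⟩
  have hS : ⋃₀ {s ∈ B | Disjoint s C ∨ Disjoint s D} = Set.univ := by
    refine eq_univ_of_forall fun x => ?_
    have hx : x ∈ Cᶜ ∪ Dᶜ := by simp [← compl_inter, hCD.inter_eq]
    rcases hx with hx | hx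
    · obtain ⟨s, hsB, hxs, hsC⟩ := hB.exists_subset_of_mem_open hx hC.isOpen_compl
      exact ⟨s, ⟨hsB, Or.inl (subset_compl_iff_disjoint_right.1 hsC)⟩, hxs⟩
    · obtain ⟨s, hsB, hxs, hsD⟩ := hB.exists_subset_of_mem_open hx hD.isOpen_compl
      exact ⟨s, ⟨hsB, Or.inr (subset_compl_iff_disjoint_right.1 hsD)⟩, hxs⟩
  obtain ⟨T, hTc, hTS, hTU⟩ :=
    isOpen_sUnion_countable _ fun s hs => (hBc s (mem_sep_iff.1 hs).1).isOpen
  rw [hS] at hTU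
  obtain ⟨W, rfl⟩ := hTc.exists_eq_range (Nonempty.of_sUnion_eq_univ hTU)
  refine exists_isClopen_of_clopen_cover (fun n => hBc _ (hTS ⟨n, rfl⟩).1) (fun x => ?_)
    fun n => (hTS ⟨n, rfl⟩).2
  simpa using (sUnion_eq_univ_iff.1 hTU x)

end ClopenSeparation

theorem uniformContinuous_of_eventually_le_imp_lt {α : Type*} [UniformSpace α] {g : α → ℝ}
    (hg : Bornology.IsBounded (range g))
    (hsep : ∀ a b : ℚ, a < b → ∀ᶠ p in 𝓤 α, g p.1 ≤ a → g p.2 < b) : UniformContinuous g := by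
  rw [UniformContinuous, Metric.uniformity_basis_dist.tendsto_right_iff]
  intro ε hε
  -- Finitely many levels `a < a + δ` with `δ < ε` suffice to catch every jump of size `ε`.
  obtain ⟨δ, hδ, hδε⟩ := exists_rat_btwn hε
  have hK : IsCompact (closure (range g)) :=
    Metric.isCompact_of_isClosed_isBounded isClosed_closure hg.closure
  obtain ⟨F, hF⟩ := hK.elim_finite_subcover (fun a : ℚ => Ioo ((a : ℝ) + δ - ε) a)
    (fun _ => isOpen_Ioo) fun t _ => by
      obtain ⟨a, hta, hat⟩ := exists_rat_btwn (show t < t + (ε - δ) by linarith)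
      exact mem_iUnion.2 ⟨a, by constructor <;> linarith⟩
  have key : ∀ x y, (∀ a ∈ F, g x ≤ a → g y < (a + δ : ℚ)) → g y < g x + ε := by
    intro x y hxy
    obtain ⟨a, haF, hga, hag⟩ := mem_iUnion₂.1 (hF (subset_closure (mem_range_self x)))
    have := hxy a haF hag.le
    push_cast at this
    linarith
  have hev : ∀ᶠ p in 𝓤 α, ∀ a ∈ F, g p.1 ≤ a → g p.2 < (a + δ : ℚ) :=
    (eventually_all_finset F).2 fun a _ =>
      hsep a (a + δ) (lt_add_of_pos_right _ (by exact_mod_cast hδ))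
  filter_upwards [hev, tendsto_swap_uniformity.eventually hev] with p h₁ h₂
  rw [Real.dist_eq, abs_sub_lt_iff]
  constructor <;> linarith [key p.1 p.2 h₁, key p.2 p.1 h₂]

/-- The point of the Cantor set whose `k`-th ternary digit is `2` exactly when `x ∈ V k`. -/
noncomputable def cantorCode {α : Type*} (V : ℕ → Set α) (x : α) : ℝ :=
  cantorSetHomeomorphNatToBool.symm fun k => (V k).boolIndicator x

theorem cantorCode_mem_cantorSet {α : Type*} (V : ℕ → Set α) (x : α) :
    cantorCode V x ∈ cantorSet :=
  Subtype.prop _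

theorem continuous_cantorCode {α : Type*} [TopologicalSpace α] {V : ℕ → Set α}
    (hV : ∀ k, IsClopen (V k)) : Continuous (cantorCode V) :=
  continuous_subtype_val.comp <| cantorSetHomeomorphNatToBool.symm.continuous.comp <|
    continuous_pi fun k => (continuous_boolIndicator_iff_isClopen _).2 (hV k)

theorem uniformContinuous_boolIndicator_of_cantorCode {α : Type*} [UniformSpace α]
    {V : ℕ → Set α} (hV : UniformContinuous (cantorCode V)) (k : ℕ) :
    UniformContinuous (V k).boolIndicator := by
  have hψ : IsUniformInducing fun b => (cantorSetHomeomorphNatToBool.symm b : ℝ) :=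
    (continuous_subtype_val.comp cantorSetHomeomorphNatToBool.symm.continuous
      ).isUniformInducing_of_injective
        (Subtype.val_injective.comp cantorSetHomeomorphNatToBool.symm.injective)
  exact uniformContinuous_pi.1 (hψ.uniformContinuous_iff.2 hV) k

theorem exists_cantorSet_valued_uniformContinuousOn_imp {α : Type*} [UniformSpace α]
    [SecondCountableTopology α] {B : Set (Set α)} (hBc : ∀ s ∈ B, IsClopen s)
    (hB : IsTopologicalBasis B) {Y : Type*} [MetricSpace Y] [CompactSpace Y] {h : α → Y}
    (hh : Continuous h) :
    ∃ f : α → ℝ, Continuous f ∧ (∀ x, f x ∈ cantorSet) ∧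
      ∀ A : Set α, UniformContinuousOn f A → UniformContinuousOn h A := by
  rcases isEmpty_or_nonempty Y with hY | hY
  · have : IsEmpty α := h.isEmpty
    exact ⟨fun _ => 0, continuous_const, fun _ => zero_mem_cantorSet,
      fun A _ => (uniformContinuous_of_const fun x => isEmptyElim x).uniformContinuousOn⟩
  obtain ⟨y, hy⟩ := exists_dense_seq Y
  have hdist : ∀ n, Continuous fun z => dist z (y n) :=
    fun n => continuous_id.dist continuous_const
  have hsep : ∀ j : ℕ × ℚ × ℚ, ∃ U, IsClopen U ∧ (j.2.1 < j.2.2 →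
      {x | dist (h x) (y j.1) ≤ j.2.1} ⊆ U ∧ U ⊆ {x | dist (h x) (y j.1) < j.2.2}) := by
    rintro ⟨n, a, b⟩
    by_cases hab : a < b
    · obtain ⟨U, hU, hCU, hUD⟩ := hB.exists_isClopen_of_disjoint hBc
        (C := {x | dist (h x) (y n) ≤ a}) (D := {x | (b : ℝ) ≤ dist (h x) (y n)})
        (isClosed_le ((hdist n).comp hh) continuous_const)
        (isClosed_le continuous_const ((hdist n).comp hh))
        (disjoint_left.2 fun x ha hb =>
          (Rat.cast_lt (K := ℝ).2 hab).not_ge (le_trans (α := ℝ) hb ha))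
      exact ⟨U, hU, fun _ => ⟨hCU, fun x hx =>
        show dist (h x) (y n) < b from not_le.1 fun hb => disjoint_left.1 hUD hx hb⟩⟩
    · exact ⟨∅, isClopen_empty, fun hab' => absurd hab' hab⟩
  choose U hU hUsep using hsep
  obtain ⟨e, he⟩ := exists_surjective_nat (ℕ × ℚ × ℚ)
  refine ⟨cantorCode (U ∘ e), continuous_cantorCode fun k => hU (e k),
    cantorCode_mem_cantorSet _, fun A hA => ?_⟩
  rw [uniformContinuousOn_iff_restrict] at hA ⊢
  have hΦ : IsUniformInducing fun z : Y => fun n => dist z (y n) :=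
    (continuous_pi hdist).isUniformInducing_of_injective (injective_dist_of_denseRange hy)
  refine hΦ.uniformContinuous_iff.2 <| uniformContinuous_pi.2 fun n =>
    uniformContinuous_of_eventually_le_imp_lt ?_ fun a b hab => ?_
  · exact (isCompact_range (hdist n)).isBounded.subset
      (by rintro _ ⟨x, rfl⟩; exact mem_range_self _)
  obtain ⟨k, hk⟩ := he (n, a, b)
  have hsub : {x | dist (h x) (y n) ≤ a} ⊆ U (e k) ∧ U (e k) ⊆ {x | dist (h x) (y n) < b} := by
    rw [hk]; exact hUsep (n, a, b) hab
  filter_upwards [eventually_mem_iff_of_uniformContinuous_boolIndicator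
    (uniformContinuous_boolIndicator_of_cantorCode hA k)] with p hp hpa
  exact hsub.2 (hp.1 (hsub.1 hpa))

theorem stmt_3_general (κ : Cardinal.{0})
    (X : Type) [MetricSpace X] [CompactSpace X] (E : Set X)
    (hzerodim : ∃ B : Set (Set E), (∀ s ∈ B, IsClopen s) ∧
      TopologicalSpace.IsTopologicalBasis B)
    (hex : ∃ (Y : Type) (_ : MetricSpace Y) (_ : CompactSpace Y) (h : E → Y),
      Continuous h ∧ ∀ A : Set E, #A = κ → ¬ UniformContinuousOn h A) :
    ∃ f : E → ℝ, Continuous f ∧ (∀ x, f x ∈ cantorTernarySet) ∧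
      ∀ A : Set E, #A = κ → ¬ UniformContinuousOn f A := by
  obtain ⟨B, hBc, hB⟩ := hzerodim
  obtain ⟨Y, _, _, h, hh, hnot⟩ := hex
  obtain ⟨f, hf, hfC, hfh⟩ := exists_cantorSet_valued_uniformContinuousOn_imp hBc hB hh
  exact ⟨f, hf, fun x => cantorSet_subset_cantorTernarySet (hfC x),
    fun A hA hfA => hnot A hA (hfh A hfA)⟩

/-- If `E` is a zero-dimensional subset of a compact metric space `X` and there is a
continuous function from `E` to some compact metric space `Y` which is not uniformly
continuous on any subset of `E` of cardinality `κ`, then there is such a function from `E`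
to `ℝ` taking values in the Cantor ternary set. -/
theorem stmt_3 (κ : Cardinal.{0}) (hκ : aleph 0 < κ)
    (X : Type) [MetricSpace X] [CompactSpace X] (E : Set X)
    (hzerodim : ∃ B : Set (Set E), (∀ s ∈ B, IsClopen s) ∧
      TopologicalSpace.IsTopologicalBasis B)
    (hex : ∃ (Y : Type) (_ : MetricSpace Y) (_ : CompactSpace Y) (h : E → Y),
      Continuous h ∧ ∀ A : Set E, #A = κ → ¬ UniformContinuousOn h A) :
    ∃ f : E → ℝ, Continuous f ∧ (∀ x, f x ∈ cantorTernarySet) ∧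
      ∀ A : Set E, #A = κ → ¬ UniformContinuousOn f A :=
  stmt_3_general κ X E hzerodim hex
end

section
/- Let κ be an uncountable cardinal, let X be a compact metric space, and let E ⊆ X be a subset which, with the subspace topology, is zero-dimensional. Suppose there exist a compact metric space Y and a continuous function h : E → Y which is not uniformly continuous on any subset of E of cardinality κ. Then for every compact metric space Z of cardinality greater than ℵ₀ there exists a continuous function g : E → Z which is not uniformly continuous on any subset of E of cardinality κ. -/
/-!
Since `Z` is uncountable it contains a Cantor set, i.e. a continuous injection of `ℕ → Bool`,
and such an injection of a compact space is a uniform embedding. It therefore suffices to find a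
continuous `g : E → (ℕ → Bool)` such that `h` is uniformly continuous for the uniformity pulled
back along `g`: then uniform continuity of `g` on `A` forces that of `h`. We take for `g` the
indicators of a sequence of clopen sets containing, for every `ε > 0`, a finite cover of `E` by
sets on which `h` oscillates by less than `ε`. These come from pulling back finite covers of `Y`
by balls of radius `1 / (n + 1)` and shrinking them to clopen covers, which is possible because
`E` is Lindelöf with a clopen basis.
-/

open Cardinal Set Filter Uniformity Function TopologicalSpace

section ClopenShrinking

variable {T : Type*} [TopologicalSpace T]

theorem exists_continuous_nat_forall_mem_of_isClopen {c : ℕ → Set T} (hc : ∀ n, IsClopen (c n))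
    (hcov : ∀ x, ∃ n, x ∈ c n) : ∃ φ : T → ℕ, Continuous φ ∧ ∀ x, x ∈ c (φ x) := by
  classical
  refine ⟨fun x => Nat.find (hcov x), continuous_discrete_rng.2 fun n => ?_,
    fun x => Nat.find_spec (hcov x)⟩
  rw [preimage_find_eq_disjointed]
  exact (disjointedRec (fun t i ht => ht.diff (hc i)) (hc n)).isOpen

namespace TopologicalSpace.IsTopologicalBasis

variable [LindelofSpace T] {B : Set (Set T)} {ι : Type*} {U : ι → Set T}

theorem exists_seq_isClopen_refinement [Nonempty T] (hB : IsTopologicalBasis B)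
    (hBc : ∀ s ∈ B, IsClopen s) (hU : ∀ i, IsOpen (U i)) (hcov : ∀ x, ∃ i, x ∈ U i) :
    ∃ (c : ℕ → Set T) (r : ℕ → ι), (∀ n, IsClopen (c n)) ∧ (∀ n, c n ⊆ U (r n)) ∧
      ∀ x, ∃ n, x ∈ c n := by
  let J := {p : Set T × ι // p.1 ∈ B ∧ p.1 ⊆ U p.2}
  have hJcov : ∀ x, ∃ p : J, x ∈ p.1.1 := fun x => by
    obtain ⟨i, hi⟩ := hcov x
    obtain ⟨b, hbB, hxb, hbU⟩ := hB.exists_subset_of_mem_open hi (hU i)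
    exact ⟨⟨(b, i), hbB, hbU⟩, hxb⟩
  have : Nonempty J := ⟨(hJcov (Classical.arbitrary T)).choose⟩
  obtain ⟨f, hf⟩ := isLindelof_univ.indexed_countable_subcover (fun p : J => p.1.1)
    (fun p => (hBc _ p.2.1).isOpen) fun x _ => mem_iUnion.2 (hJcov x)
  exact ⟨fun n => (f n).1.1, fun n => (f n).1.2, fun n => hBc _ (f n).2.1, fun n => (f n).2.2,
    fun x => mem_iUnion.1 (hf (mem_univ x))⟩

theorem exists_isClopen_shrinking (hB : IsTopologicalBasis B) (hBc : ∀ s ∈ B, IsClopen s)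
    (hU : ∀ i, IsOpen (U i)) (hcov : ∀ x, ∃ i, x ∈ U i) :
    ∃ W : ι → Set T, (∀ i, IsClopen (W i)) ∧ (∀ i, W i ⊆ U i) ∧ ∀ x, ∃ i, x ∈ W i := by
  rcases isEmpty_or_nonempty T with hT | hT
  · exact ⟨fun _ => ∅, fun _ => isClopen_empty, fun _ => empty_subset _, isEmptyElim⟩
  obtain ⟨c, r, hc, hcU, hccov⟩ := hB.exists_seq_isClopen_refinement hBc hU hcov
  obtain ⟨φ, hφ, hφc⟩ := exists_continuous_nat_forall_mem_of_isClopen hc hccov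
  refine ⟨fun i => φ ⁻¹' (r ⁻¹' {i}), fun i => (isClopen_discrete _).preimage hφ,
    fun i x hx => ?_, fun x => ⟨r (φ x), rfl⟩⟩
  rw [← show r (φ x) = i from hx]
  exact hcU _ (hφc x)

theorem exists_seq_isClopen_finite_cover_dist_lt {Y : Type*} [PseudoMetricSpace Y]
    [CompactSpace Y] (hB : IsTopologicalBasis B) (hBc : ∀ s ∈ B, IsClopen s) {h : T → Y}
    (hh : Continuous h) :
    ∃ C : ℕ → Set T, (∀ k, IsClopen (C k)) ∧ ∀ ε > 0, ∃ K : Set ℕ, K.Finite ∧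
      (∀ x, ∃ k ∈ K, x ∈ C k) ∧ ∀ k ∈ K, ∀ x ∈ C k, ∀ y ∈ C k, dist (h x) (h y) < ε := by
  have hnet : ∀ n : ℕ, ∃ t : Set Y, t.Finite ∧ ∀ y, ∃ z ∈ t, y ∈ Metric.ball z (1 / (n + 1)) :=
    fun n => by
      obtain ⟨t, -, ht, hcov⟩ := finite_cover_balls_of_compact (isCompact_univ (X := Y))
        (Nat.one_div_pos_of_nat (α := ℝ) (n := n))
      exact ⟨t, ht, fun y => by simpa using hcov (mem_univ y)⟩
  choose t ht hnet using hnet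
  have := fun n => (ht n).to_subtype
  have hW : ∀ n, ∃ W : t n → Set T, (∀ z, IsClopen (W z)) ∧
      (∀ z, W z ⊆ h ⁻¹' Metric.ball z (1 / (n + 1))) ∧ ∀ x, ∃ z, x ∈ W z := fun n =>
    hB.exists_isClopen_shrinking hBc (fun z => Metric.isOpen_ball.preimage hh) fun x => by
      obtain ⟨z, hz, hxz⟩ := hnet n (h x)
      exact ⟨⟨z, hz⟩, hxz⟩
  choose W hWc hWball hWcov using hW
  -- `∅` is added only to make the family nonempty, so that `ℕ` can enumerate it.
  obtain ⟨C, hC⟩ : ∃ C : ℕ → Set T, insert ∅ (⋃ n, range (W n)) = range C :=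
    ((countable_iUnion fun n => countable_range (W n)).insert ∅).exists_eq_range
      (insert_nonempty _ _)
  refine ⟨C, fun k => ?_, fun ε hε => ?_⟩
  · rcases (hC ▸ mem_range_self k : C k ∈ insert ∅ (⋃ n, range (W n))) with h0 | hW
    · exact h0 ▸ isClopen_empty
    · obtain ⟨n, z, hz⟩ := mem_iUnion.1 hW
      exact hz ▸ hWc n z
  · obtain ⟨n, hn⟩ := exists_nat_one_div_lt (half_pos hε)
    choose k hk using fun z : t n =>
      (hC ▸ mem_insert_of_mem ∅ (mem_iUnion.2 ⟨n, mem_range_self z⟩) : W n z ∈ range C)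
    refine ⟨range k, finite_range k, fun x => ?_, ?_⟩
    · obtain ⟨z, hz⟩ := hWcov n x
      exact ⟨k z, mem_range_self z, (hk z).symm ▸ hz⟩
    · rintro _ ⟨z, rfl⟩ x hx y hy
      rw [hk] at hx hy
      have hxz : dist (h x) z < 1 / (n + 1) := hWball n z hx
      have hyz : dist (h y) z < 1 / (n + 1) := hWball n z hy
      linarith [dist_triangle_right (h x) (h y) z]

end TopologicalSpace.IsTopologicalBasis

end ClopenShrinking

section Indicators

variable {T ι : Type*} {C : ι → Set T}

noncomputable def boolIndicators (C : ι → Set T) (x : T) (k : ι) : Bool := (C k).boolIndicator x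

theorem continuous_boolIndicators [TopologicalSpace T] (hC : ∀ k, IsClopen (C k)) :
    Continuous (boolIndicators C) :=
  continuous_pi fun k => (continuous_boolIndicator_iff_isClopen _).2 (hC k)

theorem tendsto_comap_boolIndicators {Y : Type*} [PseudoMetricSpace Y] {h : T → Y}
    (hC : ∀ ε > 0, ∃ K : Set ι, K.Finite ∧ (∀ x, ∃ k ∈ K, x ∈ C k) ∧
      ∀ k ∈ K, ∀ x ∈ C k, ∀ y ∈ C k, dist (h x) (h y) < ε) :
    Tendsto (fun p : T × T => (h p.1, h p.2))
      (comap (fun p : T × T => (boolIndicators C p.1, boolIndicators C p.2)) (𝓤 (ι → Bool)))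
      (𝓤 Y) := by
  refine Metric.uniformity_basis_dist.tendsto_right_iff.2 fun ε hε => ?_
  obtain ⟨K, hK, hcov, hsmall⟩ := hC ε hε
  have hagree : {q : (ι → Bool) × (ι → Bool) | ∀ k ∈ K, q.1 k = q.2 k} ∈ 𝓤 (ι → Bool) := by
    simp only [ofPred_forall]
    exact (biInter_mem hK).2 fun k _ => Pi.uniformContinuous_proj (fun _ : ι => Bool) k
      (DiscreteUniformity.relId_mem_uniformity Bool)
  filter_upwards [preimage_mem_comap hagree] with ⟨x, y⟩ hxy
  obtain ⟨k, hk, hx⟩ := hcov x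
  have hy : y ∈ C k := by
    have := hxy k hk
    simp only [boolIndicators, (mem_iff_boolIndicator _ _).1 hx] at this
    exact (mem_iff_boolIndicator _ _).2 this.symm
  exact hsmall k hk x hx y hy

end Indicators

theorem Continuous.isUniformInducing_of_injective_s4 {α β : Type*} [UniformSpace α]
    [UniformSpace β] [CompactSpace α] [T2Space β] {f : α → β} (hf : Continuous f)
    (hinj : Injective f) : IsUniformInducing f := by
  rw [isUniformInducing_iff_uniformSpace]
  refine unique_uniformity_of_compact ?_ rfl
  rw [UniformSpace.toTopologicalSpace_comap]
  exact (hf.isClosedEmbedding hinj).eq_induced.symm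

theorem stmt_4_general (κ : Cardinal.{0})
    (X : Type) [MetricSpace X] [CompactSpace X] (E : Set X)
    (hzerodim : ∃ B : Set (Set E), (∀ s ∈ B, IsClopen s) ∧
      TopologicalSpace.IsTopologicalBasis B)
    (hex : ∃ (Y : Type) (_ : MetricSpace Y) (_ : CompactSpace Y) (h : E → Y),
      Continuous h ∧ ∀ A : Set E, #A = κ → ¬ UniformContinuousOn h A) :
    ∀ (Z : Type) [MetricSpace Z] [CompactSpace Z], aleph 0 < #Z →
      ∃ g : E → Z, Continuous g ∧
        ∀ A : Set E, #A = κ → ¬ UniformContinuousOn g A := by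
  intro Z _ _ hZ
  obtain ⟨B, hBc, hB⟩ := hzerodim
  obtain ⟨Y, _, _, h, hh, hnotUC⟩ := hex
  obtain ⟨C, hC, hCsmall⟩ := hB.exists_seq_isClopen_finite_cover_dist_lt hBc hh
  have hZunc : ¬ (univ : Set Z).Countable := by
    rw [countable_univ_iff, ← mk_le_aleph0_iff, ← aleph_zero]
    exact hZ.not_ge
  obtain ⟨f, -, hf, hfinj⟩ := isClosed_univ.exists_nat_bool_injection_of_not_countable hZunc
  refine ⟨f ∘ boolIndicators C, hf.comp (continuous_boolIndicators hC), fun A hA hUC => ?_⟩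
  have hUC' : UniformContinuousOn (boolIndicators C) A :=
    (hf.isUniformInducing_of_injective_s4 hfinj).uniformContinuousOn_iff.2 hUC
  exact hnotUC A hA ((tendsto_comap_boolIndicators hCsmall).mono_left hUC'.le_comap)

/-- If `E` is a zero-dimensional subset of a compact metric space `X` and there is a
continuous function from `E` to some compact metric space `Y` which is not uniformly
continuous on any subset of `E` of cardinality `κ`, then for every uncountable compact
metric space `Z` there is such a continuous function from `E` to `Z`. -/
theorem stmt_4 (κ : Cardinal.{0}) (hκ : aleph 0 < κ)
    (X : Type) [MetricSpace X] [CompactSpace X] (E : Set X)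
    (hzerodim : ∃ B : Set (Set E), (∀ s ∈ B, IsClopen s) ∧
      TopologicalSpace.IsTopologicalBasis B)
    (hex : ∃ (Y : Type) (_ : MetricSpace Y) (_ : CompactSpace Y) (h : E → Y),
      Continuous h ∧ ∀ A : Set E, #A = κ → ¬ UniformContinuousOn h A) :
    ∀ (Z : Type) [MetricSpace Z] [CompactSpace Z], aleph 0 < #Z →
      ∃ g : E → Z, Continuous g ∧
        ∀ A : Set E, #A = κ → ¬ UniformContinuousOn g A :=
  stmt_4_general κ X E hzerodim hex
end

section
/- Let κ ≤ λ ≤ 𝔠 be uncountable cardinals and assume that the cofinality of λ is uncountable. Then the following are equivalent: (1) C_8(λ,κ) holds; (2) there exist a set E ⊆ ℝ of cardinality λ, a compact metric space Y, and a continuous function f : E → Y which is not uniformly continuous on any subset of E of cardinality κ. -/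
open Cardinal Set

lemma ucOn_mono {α β : Type*} [UniformSpace α] [UniformSpace β] {f : α → β} {s t : Set α}
    (h : UniformContinuousOn f t) (hst : s ⊆ t) : UniformContinuousOn f s :=
  h.mono_left (inf_le_inf_left _ (Filter.principal_mono.2 (Set.prod_mono hst hst)))

lemma exists_clopen_partition {X : Type*} [TopologicalSpace X]
    [SecondCountableTopology X]
    (hbasis : ∀ (x : X) (U : Set X), IsOpen U → x ∈ U → ∃ V : Set X, IsClopen V ∧ x ∈ V ∧ V ⊆ U)
    {k : ℕ} (U : Fin k → Set X) (hUo : ∀ i, IsOpen (U i)) (hcov : ∀ x, ∃ i, x ∈ U i) :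
    ∃ Z : Fin k → Set X, (∀ i, IsClopen (Z i)) ∧ (∀ x, ∃ i, x ∈ Z i) ∧ (∀ i, Z i ⊆ U i) := by
  classical
  rcases isEmpty_or_nonempty X with hX | hX
  · exact ⟨fun _ => ∅, fun _ => isClopen_empty, fun x => (IsEmpty.false x).elim,
      fun _ => empty_subset _⟩
  · choose ix hix using hcov
    choose V hVclopen hVmem hVsub using fun x => hbasis x (U (ix x)) (hUo _) (hix x)
    obtain ⟨T, hTc, hTeq⟩ := TopologicalSpace.isOpen_iUnion_countable V (fun x => (hVclopen x).2)
    have hTuniv : ⋃ x ∈ T, V x = Set.univ := by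
      rw [hTeq, eq_univ_iff_forall]
      exact fun x => mem_iUnion.2 ⟨x, hVmem x⟩
    have hTne : T.Nonempty := by
      rcases Set.eq_empty_or_nonempty T with h | h
      · exfalso
        rw [h] at hTuniv
        simp only [Set.biUnion_empty] at hTuniv
        exact Set.empty_ne_univ hTuniv
      · exact h
    obtain ⟨e, hTe⟩ := hTc.exists_eq_range hTne
    have hecov : ∀ x : X, ∃ n, x ∈ V (e n) := by
      intro x
      have hx : x ∈ ⋃ y ∈ T, V y := hTuniv ▸ Set.mem_univ x
      rcases mem_iUnion₂.1 hx with ⟨y, hy, hxy⟩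
      rw [hTe] at hy; rcases hy with ⟨n, rfl⟩
      exact ⟨n, hxy⟩
    have hpre : ∀ n : ℕ, IsClopen (⋃ m ∈ Finset.range n, V (e m)) := by
      intro n
      induction n with
      | zero => simpa using isClopen_empty
      | succ n ih =>
        rw [Finset.range_add_one, Finset.set_biUnion_insert]
        exact (hVclopen _).union ih
    set W : ℕ → Set X := fun n => V (e n) \ ⋃ m ∈ Finset.range n, V (e m) with hW
    have hWclopen : ∀ n, IsClopen (W n) := fun n => (hVclopen _).diff (hpre n)
    have hWsub : ∀ n, W n ⊆ V (e n) := fun n => diff_subset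
    have hWdisj : ∀ {m n : ℕ}, m ≠ n → ∀ {x : X}, x ∈ W m → x ∈ W n → False := by
      intro m n hmn x hxm hxn
      rcases lt_or_gt_of_ne hmn with h | h
      · exact hxn.2 (mem_iUnion₂.2 ⟨m, Finset.mem_range.2 h, hxm.1⟩)
      · exact hxm.2 (mem_iUnion₂.2 ⟨n, Finset.mem_range.2 h, hxn.1⟩)
    have hWcov : ∀ x, ∃ n, x ∈ W n := by
      intro x
      have hex := hecov x
      refine ⟨Nat.find hex, Nat.find_spec hex, ?_⟩
      intro hmem
      rcases mem_iUnion₂.1 hmem with ⟨m, hm, hxm⟩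
      exact Nat.find_min hex (Finset.mem_range.1 hm) hxm
    refine ⟨fun i => ⋃ n ∈ {n : ℕ | ix (e n) = i}, W n, fun i => ⟨?_, ?_⟩, ?_, ?_⟩
    · -- closed
      have hcompl : (⋃ n ∈ {n : ℕ | ix (e n) = i}, W n)ᶜ
          = ⋃ n ∈ {n : ℕ | ix (e n) ≠ i}, W n := by
        apply Set.eq_of_subset_of_subset
        · intro x hx
          rcases hWcov x with ⟨n, hn⟩
          have : ix (e n) ≠ i := by
            intro hni
            exact hx (mem_iUnion₂.2 ⟨n, hni, hn⟩)
          exact mem_iUnion₂.2 ⟨n, this, hn⟩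
        · intro x hx hx'
          rcases mem_iUnion₂.1 hx with ⟨n, hn, hxn⟩
          rcases mem_iUnion₂.1 hx' with ⟨n', hn', hxn'⟩
          have : n ≠ n' := by rintro rfl; exact hn hn'
          exact hWdisj this hxn hxn'
      rw [← isOpen_compl_iff, hcompl]
      exact isOpen_biUnion fun n _ => (hWclopen n).2
    · exact isOpen_biUnion fun n _ => (hWclopen n).2
    · intro x
      rcases hWcov x with ⟨n, hn⟩
      exact ⟨ix (e n), mem_iUnion₂.2 ⟨n, rfl, hn⟩⟩
    · intro i x hx
      rcases mem_iUnion₂.1 hx with ⟨n, hn, hxn⟩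
      exact hn ▸ hVsub (e n) (hWsub n hxn)

set_option maxHeartbeats 1000000 in
lemma exists_real_factor {E : Set ℝ} {Y : Type*} [MetricSpace Y] [CompactSpace Y]
    (f : E → Y) (hf : Continuous f)
    (hbasis : ∀ (x : E) (U : Set E), IsOpen U → x ∈ U → ∃ V, IsClopen V ∧ x ∈ V ∧ V ⊆ U) :
    ∃ H : E → ℝ, Continuous H ∧ ∀ A : Set E, UniformContinuousOn H A → UniformContinuousOn f A := by
  classical
  have key : ∀ m : ℕ, ∃ (k : ℕ) (Z : Fin k → Set E), (∀ i, IsClopen (Z i)) ∧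
      (∀ x, ∃ i, x ∈ Z i) ∧
      (∀ i, ∀ x ∈ Z i, ∀ y ∈ Z i, dist (f x) (f y) ≤ 2 * (1/2 : ℝ) ^ m) := by
    intro m
    have hε : (0:ℝ) < (1/2)^m := by positivity
    obtain ⟨t, htf, htcov⟩ := Metric.totallyBounded_iff.1
      ((isCompact_univ : IsCompact (Set.univ : Set Y)).totallyBounded) _ hε
    set k := htf.toFinset.card with hk
    set c : Fin k → Y := fun i => (htf.toFinset.equivFin.symm i : Y) with hc
    have hcball : ∀ y : Y, ∃ i, y ∈ Metric.ball (c i) ((1/2)^m) := by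
      intro y
      have hy : y ∈ ⋃ z ∈ t, Metric.ball z ((1/2)^m) := htcov (Set.mem_univ y)
      rcases Set.mem_iUnion₂.1 hy with ⟨z, hz, hyz⟩
      have hz' : z ∈ htf.toFinset := htf.mem_toFinset.2 hz
      refine ⟨htf.toFinset.equivFin ⟨z, hz'⟩, ?_⟩
      simpa [hc, Equiv.symm_apply_apply] using hyz
    set U : Fin k → Set E := fun i => f ⁻¹' Metric.ball (c i) ((1/2)^m) with hU
    obtain ⟨Z, hZclopen, hZcov, hZsub⟩ := exists_clopen_partition hbasis U
      (fun i => Metric.isOpen_ball.preimage hf) (fun x => hcball (f x))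
    refine ⟨k, Z, hZclopen, hZcov, ?_⟩
    intro i x hx y hy
    have hx' : dist (f x) (c i) < (1/2)^m := hZsub i hx
    have hy' : dist (f y) (c i) < (1/2)^m := hZsub i hy
    calc dist (f x) (f y) ≤ dist (f x) (c i) + dist (c i) (f y) := dist_triangle _ _ _
      _ ≤ 2*(1/2)^m := by rw [dist_comm (c i)]; linarith
  choose k Z hZclopen hZcov hosc using key
  set Z' : ℕ → ℕ → Set E := fun m r => if h : r < k m then Z m ⟨r, h⟩ else ∅ with hZ'
  have hZ'eq : ∀ (m : ℕ) (i : Fin (k m)), Z' m i.1 = Z m i := by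
    intro m i; simp [hZ']
  have hZ'clopen : ∀ m r, IsClopen (Z' m r) := by
    intro m r
    by_cases h : r < k m <;> simp [hZ', h, hZclopen, isClopen_empty]
  set Zp : ℕ → Set E := fun p => Z' (Nat.unpair p).1 (Nat.unpair p).2 with hZp
  have hZpeq : ∀ m r, Zp (Nat.pair m r) = Z' m r := by
    intro m r; simp [hZp, Nat.unpair_pair]
  have hZpclopen : ∀ p, IsClopen (Zp p) := fun p => hZ'clopen _ _
  set g : ℕ → E → ℝ := fun p x => if x ∈ Zp p then (4⁻¹:ℝ)^p else 0 with hg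
  have hg0 : ∀ p x, 0 ≤ g p x := by
    intro p x
    by_cases h : x ∈ Zp p <;> simp [hg, h] <;> positivity
  have hgle : ∀ p x, g p x ≤ (4⁻¹:ℝ)^p := by
    intro p x
    by_cases h : x ∈ Zp p <;> simp [hg, h] <;> positivity
  have hgabs : ∀ p x, |g p x| ≤ (4⁻¹:ℝ)^p := by
    intro p x
    rw [abs_of_nonneg (hg0 p x)]; exact hgle p x
  have hgeo : Summable (fun p : ℕ => (4⁻¹:ℝ)^p) :=
    summable_geometric_of_lt_one (by norm_num) (by norm_num)
  have hgsum : ∀ x, Summable fun p => g p x := fun x =>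
    Summable.of_nonneg_of_le (fun p => hg0 p x) (fun p => hgle p x) hgeo
  have hgcont : ∀ p, Continuous (g p) := by
    intro p
    rw [continuous_iff_continuousAt]
    intro x
    by_cases hx : x ∈ Zp p
    · have hcA : ContinuousAt (fun _ : E => (4⁻¹:ℝ)^p) x := continuousAt_const
      refine hcA.congr ?_
      filter_upwards [(hZpclopen p).2.eventually_mem hx] with y hy
      simp [hg, hy]
    · have hcA : ContinuousAt (fun _ : E => (0:ℝ)) x := continuousAt_const
      refine hcA.congr ?_
      filter_upwards [(hZpclopen p).compl.2.eventually_mem hx] with y hy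
      have hy' : y ∉ Zp p := hy
      simp [hg, hy']
  set H : E → ℝ := fun x => ∑' p, g p x with hH
  have hHcont : Continuous H :=
    continuous_tsum hgcont hgeo (fun p x => by rw [Real.norm_eq_abs]; exact hgabs p x)
  have sep : ∀ (x y : E) (P : ℕ), |H x - H y| < (2/3) * (4⁻¹:ℝ)^P →
      ∀ p ≤ P, (x ∈ Zp p ↔ y ∈ Zp p) := by
    intro x y P hest p hpP
    by_contra hne
    have hex : ∃ q, ¬(x ∈ Zp q ↔ y ∈ Zp q) := ⟨p, hne⟩
    set q₀ := Nat.find hex with hq₀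
    have hq₀spec : ¬(x ∈ Zp q₀ ↔ y ∈ Zp q₀) := Nat.find_spec hex
    have hq₀P : q₀ ≤ P := le_trans (Nat.find_min' hex hne) hpP
    set d : ℕ → ℝ := fun q => g q x - g q y with hd
    have hdsum : Summable d := (hgsum x).sub (hgsum y)
    have hdlow : ∀ q < q₀, d q = 0 := by
      intro q hq
      have hiff : x ∈ Zp q ↔ y ∈ Zp q := not_not.1 (Nat.find_min hex hq)
      by_cases hxq : x ∈ Zp q
      · simp [hd, hg, hxq, hiff.1 hxq]
      · have hyq : y ∉ Zp q := fun h => hxq (hiff.2 h)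
        simp [hd, hg, hxq, hyq]
    have hdq₀ : |d q₀| = (4⁻¹:ℝ)^q₀ := by
      by_cases hxq : x ∈ Zp q₀
      · have hyq : y ∉ Zp q₀ := fun h => hq₀spec ⟨fun _ => h, fun _ => hxq⟩
        rw [hd]; simp only [hg, if_pos hxq, if_neg hyq, sub_zero]
        exact abs_of_nonneg (by positivity)
      · have hyq : y ∈ Zp q₀ := by
          by_contra hyq
          exact hq₀spec ⟨fun h => absurd h hxq, fun h => absurd h hyq⟩
        rw [hd]; simp only [hg, if_neg hxq, if_pos hyq, zero_sub, abs_neg]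
        exact abs_of_nonneg (by positivity)
    have hdecomp : ∑' q, d q = d q₀ + ∑' q, ite (q = q₀) 0 (d q) := Summable.tsum_eq_add_tsum_ite hdsum q₀
    set bnd : ℕ → ℝ := fun q => if q ≤ q₀ then 0 else (4⁻¹:ℝ)^q with hbnd
    have hbnd0 : ∀ q, 0 ≤ bnd q := by
      intro q; by_cases h : q ≤ q₀ <;> simp [hbnd, h] <;> positivity
    have hbndle : ∀ q, bnd q ≤ (4⁻¹:ℝ)^q := by
      intro q; by_cases h : q ≤ q₀ <;> simp [hbnd, h] <;> positivity
    have hbnds : Summable bnd := Summable.of_nonneg_of_le hbnd0 hbndle hgeo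
    have hite_le : ∀ q, |ite (q = q₀) 0 (d q)| ≤ bnd q := by
      intro q
      rcases lt_trichotomy q q₀ with h | h | h
      · rw [if_neg (ne_of_lt h), hdlow q h]
        simp [hbnd, h.le]
      · subst h; simp [hbnd]
      · rw [if_neg (ne_of_gt h)]
        have hdle : |d q| ≤ (4⁻¹:ℝ)^q := by
          rw [hd]
          exact abs_sub_le_iff.2 ⟨by linarith [hg0 q y, hgle q x],
            by linarith [hg0 q x, hgle q y]⟩
        have : bnd q = (4⁻¹:ℝ)^q := by simp [hbnd, not_le.2 h]
        rw [this]; exact hdle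
    have htail : ∑' q, bnd q = (1/3) * (4⁻¹:ℝ)^q₀ := by
      have h1 : ∑ q ∈ Finset.range (q₀+1), bnd q + ∑' q, bnd (q + (q₀+1)) = ∑' q, bnd q :=
        Summable.sum_add_tsum_nat_add (q₀+1) hbnds
      have h2 : ∑ q ∈ Finset.range (q₀+1), bnd q = 0 :=
        Finset.sum_eq_zero fun q hq => by
          simp [hbnd, Nat.lt_succ_iff.1 (Finset.mem_range.1 hq)]
      have h3 : ∀ q : ℕ, bnd (q + (q₀+1)) = (4⁻¹:ℝ)^(q₀+1) * (4⁻¹)^q := by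
        intro q
        have hq : ¬(q + (q₀+1) ≤ q₀) := by omega
        simp [hbnd, hq, pow_add, mul_comm]
      rw [← h1, h2, zero_add]
      calc ∑' q, bnd (q + (q₀+1)) = ∑' q : ℕ, (4⁻¹:ℝ)^(q₀+1) * (4⁻¹)^q := tsum_congr h3
        _ = (4⁻¹:ℝ)^(q₀+1) * ∑' q : ℕ, (4⁻¹:ℝ)^q := tsum_mul_left
        _ = (4⁻¹:ℝ)^(q₀+1) * (1 - 4⁻¹)⁻¹ := by
            rw [tsum_geometric_of_lt_one (by norm_num) (by norm_num)]
        _ = (1/3) * (4⁻¹:ℝ)^q₀ := by rw [pow_succ]; ring_nf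
    have hrest : |∑' q, ite (q = q₀) 0 (d q)| ≤ (1/3) * (4⁻¹:ℝ)^q₀ := by
      have hs : Summable fun q => |ite (q = q₀) 0 (d q)| :=
        Summable.of_nonneg_of_le (fun q => abs_nonneg _) hite_le hbnds
      have hs' : Summable fun q => ‖ite (q = q₀) 0 (d q)‖ := by
        simpa only [Real.norm_eq_abs] using hs
      have habs : ‖∑' q, ite (q = q₀) 0 (d q)‖ ≤ ∑' q, ‖ite (q = q₀) 0 (d q)‖ :=
        norm_tsum_le_tsum_norm hs'
      rw [Real.norm_eq_abs] at habs
      simp only [Real.norm_eq_abs] at habs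
      refine habs.trans ?_
      calc ∑' q, |ite (q = q₀) 0 (d q)| ≤ ∑' q, bnd q := Summable.tsum_le_tsum hite_le hs hbnds
        _ = (1/3) * (4⁻¹:ℝ)^q₀ := htail
    have hxy : H x - H y = ∑' q, d q := by
      rw [hH]; exact (Summable.tsum_sub (hgsum x) (hgsum y)).symm
    have h4 : |d q₀| - |∑' q, ite (q = q₀) 0 (d q)| ≤ |H x - H y| := by
      rw [hxy, hdecomp]
      have := abs_sub_abs_le_abs_sub (d q₀) (-(∑' q, ite (q = q₀) 0 (d q)))
      simpa [sub_neg_eq_add, abs_neg] using this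
    have hPq : (4⁻¹:ℝ)^P ≤ (4⁻¹:ℝ)^q₀ :=
      pow_le_pow_of_le_one (by norm_num) (by norm_num) hq₀P
    rw [hdq₀] at h4
    nlinarith [hrest, h4, hest, hPq]
  refine ⟨H, hHcont, ?_⟩
  intro A hUC
  rw [Metric.uniformContinuousOn_iff] at hUC ⊢
  intro ε hε
  obtain ⟨m, hm⟩ := exists_pow_lt_of_lt_one (show (0:ℝ) < ε/4 by linarith)
    (by norm_num : (1/2:ℝ) < 1)
  set P : ℕ := (Finset.range (k m)).sup (fun r => Nat.pair m r) with hP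
  have hηpos : (0:ℝ) < (2/3) * (4⁻¹)^P := by positivity
  obtain ⟨δ, hδpos, hδ⟩ := hUC _ hηpos
  refine ⟨δ, hδpos, ?_⟩
  intro x hx y hy hxy
  have hHxy : |H x - H y| < (2/3) * (4⁻¹:ℝ)^P := by
    have := hδ x hx y hy hxy
    rwa [Real.dist_eq] at this
  have hiff := sep x y P hHxy
  obtain ⟨i, hxi⟩ := hZcov m x
  have hpairle : Nat.pair m i.1 ≤ P := Finset.le_sup (Finset.mem_range.2 i.2)
  have hxZp : x ∈ Zp (Nat.pair m i.1) := by
    rw [hZpeq, hZ'eq]; exact hxi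
  have hyZp : y ∈ Zp (Nat.pair m i.1) := (hiff _ hpairle).1 hxZp
  have hyZ : y ∈ Z m i := by
    rwa [hZpeq, hZ'eq] at hyZp
  calc dist (f x) (f y) ≤ 2 * (1/2)^m := hosc m i x hxi y hyZ
    _ < ε := by linarith

lemma no_Icc_subset {E : Set ℝ} {Y : Type*} [MetricSpace Y] {κ : Cardinal.{0}}
    (f : E → Y) (hf : Continuous f) (hκc : κ ≤ continuum)
    (hnon : ∀ A : Set E, #A = κ → ¬ UniformContinuousOn f A)
    {a b : ℝ} (hab : a < b) : ¬ (Set.Icc a b ⊆ E) := by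
  intro hsub
  set φ : Set.Icc a b → E := fun z => ⟨z.1, hsub z.2⟩ with hφ
  have hφc : Continuous φ := Continuous.subtype_mk continuous_subtype_val _
  have hK : IsCompact (Set.range φ) := by
    haveI : CompactSpace (Set.Icc a b) := isCompact_iff_compactSpace.mp isCompact_Icc
    exact isCompact_range hφc
  have hUC : UniformContinuousOn f (Set.range φ) :=
    hK.uniformContinuousOn_of_continuous hf.continuousOn
  have hφinj : Function.Injective φ := by
    intro u v huv
    have h' : (φ u).1 = (φ v).1 := congrArg Subtype.val huv
    exact Subtype.ext h'
  have hcard : κ ≤ #(Set.range φ) := by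
    rw [Cardinal.mk_range_eq _ hφinj, Cardinal.mk_Icc_real hab]
    exact hκc
  obtain ⟨A, hAsub, hAcard⟩ := Cardinal.le_mk_iff_exists_subset.1 hcard
  exact hnon A hAcard (ucOn_mono hUC hAsub)

lemma clopen_basis_of_no_Icc {E : Set ℝ}
    (hE : ∀ a b : ℝ, a < b → ¬ (Set.Icc a b ⊆ E)) :
    ∀ (x : E) (U : Set E), IsOpen U → x ∈ U → ∃ V, IsClopen V ∧ x ∈ V ∧ V ⊆ U := by
  intro x U hU hx
  obtain ⟨δ, hδ, hball⟩ := Metric.isOpen_iff.1 hU x hx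
  have h1 : ∃ p, p ∈ Set.Ioo (x.1 - δ) x.1 ∧ p ∉ E := by
    by_contra h
    push_neg at h
    refine hE (x.1 - 3*δ/4) (x.1 - δ/4) (by linarith) ?_
    intro z hz
    exact h z ⟨by rcases hz with ⟨h1', h2'⟩; linarith, by rcases hz with ⟨h1', h2'⟩; linarith⟩
  have h2 : ∃ q, q ∈ Set.Ioo x.1 (x.1 + δ) ∧ q ∉ E := by
    by_contra h
    push_neg at h
    refine hE (x.1 + δ/4) (x.1 + 3*δ/4) (by linarith) ?_
    intro z hz
    exact h z ⟨by rcases hz with ⟨h1', h2'⟩; linarith, by rcases hz with ⟨h1', h2'⟩; linarith⟩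
  obtain ⟨p, hp, hpE⟩ := h1
  obtain ⟨q, hq, hqE⟩ := h2
  refine ⟨Subtype.val ⁻¹' Set.Ioo p q, ⟨?_, ?_⟩, ?_, ?_⟩
  · -- closed
    have heq : (Subtype.val ⁻¹' Set.Ioo p q : Set E) = Subtype.val ⁻¹' Set.Icc p q := by
      apply Set.eq_of_subset_of_subset
      · exact fun z hz => ⟨le_of_lt hz.1, le_of_lt hz.2⟩
      · intro z hz
        constructor
        · rcases lt_or_eq_of_le hz.1 with h | h
          · exact h
          · exact absurd (h ▸ z.2) hpE
        · rcases lt_or_eq_of_le hz.2 with h | h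
          · exact h
          · exact absurd (h.symm ▸ z.2) hqE
    rw [heq]
    exact isClosed_Icc.preimage continuous_subtype_val
  · exact isOpen_Ioo.preimage continuous_subtype_val
  · exact ⟨hp.2, hq.1⟩
  · intro z hz
    apply hball
    rw [Metric.mem_ball, Subtype.dist_eq, Real.dist_eq, abs_sub_lt_iff]
    rcases hz with ⟨hz1, hz2⟩
    constructor
    · have := hq.2; linarith
    · have := hp.1; linarith

/-- `C_8(lam, κ)`: there exist a set `E ⊆ ℝ` of cardinality `lam` and a continuous
function `f : E → ℝ` which is not uniformly continuous on any subset of `E` of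
cardinality `κ`. -/
def C8 (lam κ : Cardinal.{0}) : Prop :=
  ∃ (E : Set ℝ) (f : E → ℝ),
    #E = lam ∧ Continuous f ∧ ∀ A : Set E, #A = κ → ¬ UniformContinuousOn f A

/-- For uncountable `κ ≤ lam ≤ 𝔠` with `lam` of uncountable cofinality, `C_8(lam,κ)` is
equivalent to the existence of a set `E ⊆ ℝ` of cardinality `lam`, a compact metric space
`Y`, and a continuous `f : E → Y` not uniformly continuous on any subset of `E` of
cardinality `κ`. -/
theorem stmt_5 (κ lam : Cardinal.{0}) (hκ : aleph 0 < κ) (hkl : κ ≤ lam)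
    (hlc : lam ≤ continuum) (hcof : aleph 0 < lam.ord.cof) :
    C8 lam κ ↔
      ∃ (E : Set ℝ) (Y : Type) (_ : MetricSpace Y) (_ : CompactSpace Y) (f : E → Y),
        #E = lam ∧ Continuous f ∧
        ∀ A : Set E, #A = κ → ¬ UniformContinuousOn f A := by
  have haleph0 : (aleph 0 : Cardinal) = ℵ₀ := by simp
  constructor
  · rintro ⟨E, f, hcard, hcont, hnon⟩
    classical
    set s : ℕ → Set E := fun n => {x | |f x| ≤ (n : ℝ)} with hs
    have hcover : (⋃ n, s n) = Set.univ := by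
      rw [Set.eq_univ_iff_forall]
      intro x
      obtain ⟨n, hn⟩ := exists_nat_ge (|f x|)
      exact Set.mem_iUnion.2 ⟨n, hn⟩
    have hex : ∃ n, #(s n) = lam := by
      by_contra h
      push_neg at h
      have hlt : ∀ n, #(s n) < lam := by
        intro n
        exact lt_of_le_of_ne (hcard ▸ Cardinal.mk_set_le (s n)) (h n)
      have hsup : (⨆ n, #(s n)) < lam :=
        Ordinal.iSup_lt (by rwa [Cardinal.mk_nat, ← haleph0]) hlt
      have hle : lam ≤ #ℕ * ⨆ n, #(s n) := by
        calc lam = #E := hcard.symm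
          _ = #(Set.univ : Set E) := Cardinal.mk_univ.symm
          _ = #(⋃ n, s n) := by rw [hcover]
          _ ≤ #ℕ * ⨆ n, #(s n) := Cardinal.mk_iUnion_le s
      rw [Cardinal.mk_nat] at hle
      have hℵ₀lam : ℵ₀ < lam := haleph0 ▸ hκ.trans_le hkl
      have hfin : ℵ₀ * (⨆ n, #(s n)) < lam :=
        lt_of_le_of_lt (Cardinal.mul_le_max _ _) (max_lt (max_lt hℵ₀lam hsup) hℵ₀lam)
      exact absurd hle (not_le.2 hfin)
    obtain ⟨n, hn⟩ := hex
    have hsubE : (Subtype.val '' s n : Set ℝ) ⊆ E := by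
      rintro _ ⟨w, _, rfl⟩
      exact w.2
    refine ⟨Subtype.val '' s n, Set.Icc (-(n:ℝ)) (n:ℝ), inferInstance,
      isCompact_iff_compactSpace.mp isCompact_Icc, ?_⟩
    set ι : (Subtype.val '' s n : Set ℝ) → E := Set.inclusion hsubE with hι
    have hmem : ∀ z, ι z ∈ s n := by
      rintro ⟨z, hz⟩
      rcases hz with ⟨w, hw, hwz⟩
      have : ι ⟨z, ⟨w, hw, hwz⟩⟩ = w := Subtype.ext hwz.symm
      rw [this]
      exact hw
    have hrange : ∀ z, f (ι z) ∈ Set.Icc (-(n:ℝ)) (n:ℝ) := by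
      intro z
      have := hmem z
      rw [hs] at this
      exact abs_le.1 this
    refine ⟨fun z => ⟨f (ι z), hrange z⟩, ?_, ?_, ?_⟩
    · rw [Cardinal.mk_image_eq Subtype.val_injective]
      exact hn
    · exact Continuous.subtype_mk (hcont.comp (continuous_inclusion hsubE)) _
    · intro A hA hUC
      have hinj : Function.Injective ι := Set.inclusion_injective hsubE
      refine hnon (ι '' A) (by rw [Cardinal.mk_image_eq hinj]; exact hA) ?_
      rw [Metric.uniformContinuousOn_iff] at hUC ⊢
      intro ε hε
      obtain ⟨δ, hδpos, hδ⟩ := hUC ε hε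
      refine ⟨δ, hδpos, ?_⟩
      rintro _ ⟨u, hu, rfl⟩ _ ⟨v, hv, rfl⟩ huv
      have hdist : dist u v < δ := by
        have h1 : dist (ι u) (ι v) = dist u v := by
          rw [Subtype.dist_eq, Subtype.dist_eq]
        rwa [h1] at huv
      have h2 := hδ u hu v hv hdist
      rw [Subtype.dist_eq] at h2
      exact h2
  · rintro ⟨E, Y, hYm, hYc, f, hcard, hcont, hnon⟩
    have hnoIcc : ∀ a b : ℝ, a < b → ¬ (Set.Icc a b ⊆ E) :=
      fun a b hab => no_Icc_subset f hcont (hkl.trans hlc) hnon hab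
    obtain ⟨H, hHcont, hHtrans⟩ :=
      exists_real_factor f hcont (clopen_basis_of_no_Icc hnoIcc)
    exact ⟨E, H, hcard, hHcont, fun A hA hUC => hnon A hA (hHtrans A hUC)⟩
end

section
/- Let ℵ₁ ≤ κ ≤ λ ≤ 𝔠 be cardinals. Let X and Y be compact metric spaces, let G ⊆ X be an uncountable G_δ set, and let φ : X → Y be a continuous surjection whose restriction to G is a homeomorphism of G onto φ(G). Let 𝒦 be a family of compact subsets of X containing all singletons such that for every A ⊆ G, if φ is injective on the closure of A in X, then the closure of A belongs to 𝒦. Let T ⊆ G be a set of cardinality λ with |T ∩ K| < κ for every K ∈ 𝒦. Set E = φ(T) and let f : E → X be the inverse of φ restricted to E, i.e., for each y ∈ E, f(y) is the unique point of G with φ(f(y)) = y. Then f is continuous and for every B ⊆ E of cardinality κ, the restriction of f to B is not uniformly continuous. -/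
open Cardinal

/-- If `φ : X → Y` is a continuous surjection of compact metric spaces restricting to a
homeomorphism on an uncountable G_δ set `G ⊆ X`, `𝒦` is a family of compact sets in `X`
containing all singletons and all closures `cl A` (`A ⊆ G`) on which `φ` is injective, and
`T ⊆ G` is a `κ`-`𝒦`-Lusin set of cardinality `lam`, then the inverse of `φ` on `E = φ '' T`
is continuous but not uniformly continuous on any subset of `E` of cardinality `κ`. -/
theorem stmt_7 (κ lam : Cardinal.{0}) (hκ : aleph 1 ≤ κ) (hkl : κ ≤ lam)
    (hlc : lam ≤ continuum)
    (X Y : Type) [MetricSpace X] [CompactSpace X] [MetricSpace Y] [CompactSpace Y]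
    (G : Set X) (hGδ : IsGδ G) (hGunc : aleph 0 < #G)
    (φ : X → Y) (hφc : Continuous φ) (hφs : Function.Surjective φ)
    (hφG : Topology.IsEmbedding (fun x : G => φ x))
    (𝒦 : Set (Set X)) (h𝒦comp : ∀ K ∈ 𝒦, IsCompact K)
    (h𝒦sing : ∀ x : X, {x} ∈ 𝒦)
    (h𝒦cl : ∀ A : Set X, A ⊆ G → Set.InjOn φ (closure A) → closure A ∈ 𝒦)
    (T : Set X) (hTG : T ⊆ G) (hT : #T = lam)
    (hTLusin : ∀ K ∈ 𝒦, #(↥(T ∩ K)) < κ)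
    (f : (φ '' T : Set Y) → X) (hf : ∀ y : (φ '' T : Set Y), f y ∈ G ∧ φ (f y) = ↑y) :
    Continuous f ∧
      ∀ B : Set (φ '' T : Set Y), #B = κ → ¬ UniformContinuousOn f B := by
  have hGinjOn : Set.InjOn φ G := by
    intro a ha b hb h
    have := hφG.injective (show φ (⟨a, ha⟩ : G) = φ (⟨b, hb⟩ : G) from h)
    exact congrArg Subtype.val this
  constructor
  · have hcont : Continuous fun y : (φ '' T : Set Y) => (⟨f y, (hf y).1⟩ : G) := by
      rw [hφG.toIsInducing.continuous_iff]
      have heq : ((fun x : G => φ x) ∘ fun y : (φ '' T : Set Y) => (⟨f y, (hf y).1⟩ : G))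
          = fun y : (φ '' T : Set Y) => (y : Y) := by
        funext y; exact (hf y).2
      rw [heq]
      exact continuous_subtype_val
    exact continuous_subtype_val.comp hcont
  · intro B hB hUC
    have hfinj : Function.Injective f := by
      intro y₁ y₂ h
      apply Subtype.ext
      rw [← (hf y₁).2, ← (hf y₂).2, h]
    set A : Set X := f '' B with hA
    have hAG : A ⊆ G := by rintro a ⟨y, hy, rfl⟩; exact (hf y).1
    have hInj : Set.InjOn φ (closure A) := by
      intro x₁ hx₁ x₂ hx₂ hφeq
      have key : ∀ ε > (0:ℝ), dist x₁ x₂ < ε := by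
        intro ε' hε'
        obtain ⟨δ, hδ, hδ'⟩ := (Metric.uniformContinuousOn_iff.mp hUC) (ε'/3) (by linarith)
        obtain ⟨η₁, hη₁, hc₁⟩ := Metric.continuous_iff.mp hφc x₁ (δ/2) (by linarith)
        obtain ⟨η₂, hη₂, hc₂⟩ := Metric.continuous_iff.mp hφc x₂ (δ/2) (by linarith)
        obtain ⟨a, haA, hax⟩ := Metric.mem_closure_iff.mp hx₁ (min η₁ (ε'/3)) (by positivity)
        obtain ⟨b, hbA, hbx⟩ := Metric.mem_closure_iff.mp hx₂ (min η₂ (ε'/3)) (by positivity)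
        obtain ⟨ya, hya, rfl⟩ := haA
        obtain ⟨yb, hyb, rfl⟩ := hbA
        have hd1 : dist (φ (f ya)) (φ x₁) < δ/2 := by
          apply hc₁
          rw [dist_comm]
          exact lt_of_lt_of_le hax (min_le_left _ _)
        have hd2 : dist (φ (f yb)) (φ x₂) < δ/2 := by
          apply hc₂
          rw [dist_comm]
          exact lt_of_lt_of_le hbx (min_le_left _ _)
        have hdy : dist ya yb < δ := by
          rw [Subtype.dist_eq, ← (hf ya).2, ← (hf yb).2]
          calc dist (φ (f ya)) (φ (f yb))
              ≤ dist (φ (f ya)) (φ x₁) + dist (φ x₁) (φ (f yb)) := dist_triangle _ _ _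
            _ < δ/2 + δ/2 := by
                apply add_lt_add hd1
                rw [hφeq, dist_comm]
                exact hd2
            _ = δ := by ring
        have hfd : dist (f ya) (f yb) < ε'/3 := hδ' ya hya yb hyb hdy
        calc dist x₁ x₂ ≤ dist x₁ (f ya) + dist (f ya) (f yb) + dist (f yb) x₂ :=
              dist_triangle4 _ _ _ _
          _ < ε'/3 + ε'/3 + ε'/3 := by
              apply add_lt_add (add_lt_add _ hfd)
              · rw [dist_comm]; exact lt_of_lt_of_le hbx (min_le_right _ _)
              · exact lt_of_lt_of_le hax (min_le_right _ _)
          _ = ε' := by ring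
      by_contra hne
      exact lt_irrefl _ (key _ (dist_pos.mpr hne))
    have hclK := h𝒦cl A hAG hInj
    have hlt := hTLusin _ hclK
    have hAT : A ⊆ T := by
      rintro a ⟨y, hy, rfl⟩
      obtain ⟨t, htT, hty⟩ := y.2
      have : f y = t := hGinjOn (hf y).1 (hTG htT) (by rw [(hf y).2, hty])
      rw [this]; exact htT
    have hsub : A ⊆ T ∩ closure A := fun a ha => ⟨hAT ha, subset_closure ha⟩
    have hge : κ ≤ #(↥(T ∩ closure A)) := by
      calc κ = #B := hB.symm
        _ = #(↥A) := (Cardinal.mk_image_eq hfinj).symm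
        _ ≤ _ := Cardinal.mk_le_mk_of_subset hsub
    exact absurd hlt (not_lt.mpr hge)
end

section
/- Let X be a zero-dimensional compact metric space and let G ⊆ X be a G_δ set. Then there exist a compact metric space Y and a continuous surjection φ : X → Y such that the restriction of φ to G is a homeomorphism of G onto φ(G), φ(X \ G) ∩ φ(G) = ∅, and the set Y \ φ(G) is countable. -/
/-!
Enumerate a countable clopen basis `B 0, B 1, …` of `X` and write `G = ⋂ k, V k` with `V k` open.
For `x : X` and `n : ℕ` let `ℓ n x ≤ n` be the largest `m` such that the cell of `x` cut out by
`B 0, …, B (n - 1)` lies in `V 0 ∩ … ∩ V (m - 1)`, and let `φ x n` code the pair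
(`ℓ n x`, the set of `i < ℓ n x` with `x ∈ B i`); then `Y = φ(X) ⊆ ℕ^ℕ`.
Each coordinate of `φ` only depends on a cell, so `φ` is continuous. For `x ∈ G` we have
`ℓ n x → ∞`, so `φ x` eventually records the membership of `x` in every `B i`: every neighbourhood
of `x` contains the preimage of a neighbourhood of `φ x`. This makes `φ` an embedding on `G` and
forces `φ⁻¹ {φ x} = {x}`. For `x ∉ G` the sequence `ℓ · x` is bounded, hence eventually constant,
and so is `φ x`; there are only countably many eventually constant sequences.
-/

open Filter Topology Set TopologicalSpace

theorem IsClopen.eventually_mem_iff {X : Type*} [TopologicalSpace X] {s : Set X}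
    (hs : IsClopen s) (x : X) : ∀ᶠ y in 𝓝 x, (y ∈ s ↔ x ∈ s) := by
  by_cases hx : x ∈ s
  · filter_upwards [hs.isOpen.mem_nhds hx] with y hy using iff_of_true hy hx
  · filter_upwards [hs.compl.isOpen.mem_nhds hx] with y hy using iff_of_false hy hx

theorem Set.countable_setOf_eventuallyConst {α : Type*} [Countable α] :
    {u : ℕ → α | EventuallyConst u atTop}.Countable := by
  have h : {u : ℕ → α | EventuallyConst u atTop} = ⋃ N, {u | ∀ n, N ≤ n → u n = u N} := by
    ext u
    simp [eventuallyConst_atTop]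
  rw [h]
  refine countable_iUnion fun N =>
    (countable_range fun (v : Fin (N + 1) → α) n => v ⟨min n N, by omega⟩).mono ?_
  intro u hu
  refine ⟨fun i => u i, funext fun n => ?_⟩
  rcases le_total n N with hn | hn
  · simp [min_eq_left hn]
  · simp [min_eq_right hn, hu n hn]

theorem exists_isClopen_nat_basis {X : Type*} [TopologicalSpace X] [SecondCountableTopology X]
    (h : ∃ B : Set (Set X), (∀ s ∈ B, IsClopen s) ∧ IsTopologicalBasis B) :
    ∃ B : ℕ → Set X, (∀ i, IsClopen (B i)) ∧ IsTopologicalBasis (range B) := by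
  obtain ⟨B₀, hclopen, hB₀⟩ := h
  obtain ⟨C, hCB₀, hC, hCbasis⟩ := hB₀.exists_countable
  obtain ⟨B, hB⟩ := (hC.insert ∅).exists_eq_range (insert_nonempty _ _)
  refine ⟨B, fun i => ?_, hB ▸ hCbasis.insert_empty⟩
  rcases (hB ▸ mem_range_self i : B i ∈ insert ∅ C) with h | h
  · rw [h]
    exact isClopen_empty
  · exact hclopen _ (hCB₀ h)

section ComapNhds

variable {X Y : Type*} [TopologicalSpace X] [TopologicalSpace Y] [T1Space X] {f : X → Y}

theorem eq_of_comap_nhds_le {x y : X} (hx : comap f (𝓝 (f x)) ≤ 𝓝 x) (hxy : f y = f x) :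
    y = x :=
  pure_le_nhds_iff.1 <| (map_le_iff_le_comap.1 <| by simpa [hxy] using pure_le_nhds (f x)).trans hx

theorem image_compl_inter_image_eq_empty {s : Set X}
    (h : ∀ x ∈ s, comap f (𝓝 (f x)) ≤ 𝓝 x) : f '' sᶜ ∩ f '' s = ∅ := by
  refine eq_empty_iff_forall_notMem.2 ?_
  rintro _ ⟨⟨y, hy, rfl⟩, x, hx, hxy⟩
  exact hy (eq_of_comap_nhds_le (h x hx) hxy.symm ▸ hx)

theorem isEmbedding_restrict_of_comap_nhds_le (hf : Continuous f) {s : Set X}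
    (h : ∀ x ∈ s, comap f (𝓝 (f x)) ≤ 𝓝 x) : IsEmbedding (fun x : s => f x) := by
  refine ⟨isInducing_iff_nhds.2 fun x => ?_,
    fun x y hxy => Subtype.ext (eq_of_comap_nhds_le (h y y.2) hxy)⟩
  rw [nhds_subtype, ← le_antisymm (h x x.2) (hf.tendsto x).le_comap, comap_comap]
  rfl

end ComapNhds

namespace ClopenCoding

variable {X : Type*} {B V : ℕ → Set X} {m n i k : ℕ} {x y : X}

open Classical in
noncomputable def trace (B : ℕ → Set X) (n : ℕ) (x : X) : Finset ℕ :=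
  {i ∈ Finset.range n | x ∈ B i}

theorem trace_eq_iff : trace B n y = trace B n x ↔ ∀ i < n, (y ∈ B i ↔ x ∈ B i) := by
  simp only [trace, Finset.ext_iff, Finset.mem_filter, Finset.mem_range]
  exact forall_congr' fun i => ⟨fun h hi => by simpa [hi] using h, fun h => and_congr_right h⟩

theorem trace_eq_of_le (hmn : m ≤ n) (h : trace B n y = trace B n x) :
    trace B m y = trace B m x :=
  trace_eq_iff.2 fun i hi => trace_eq_iff.1 h i (hi.trans_le hmn)

section Level

open Classical

noncomputable def level (B V : ℕ → Set X) (n : ℕ) (x : X) : ℕ :=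
  Nat.findGreatest (fun m => {y | trace B n y = trace B n x} ⊆ ⋂ k < m, V k) n

theorem level_le : level B V n x ≤ n :=
  Nat.findGreatest_le n

theorem setOf_trace_eq_subset : {y | trace B n y = trace B n x} ⊆ ⋂ k < level B V n x, V k :=
  Nat.findGreatest_spec (P := fun m => {y | trace B n y = trace B n x} ⊆ ⋂ k < m, V k)
    (Nat.zero_le n) (by simp)

theorem le_level (hmn : m ≤ n) (h : {y | trace B n y = trace B n x} ⊆ ⋂ k < m, V k) :
    m ≤ level B V n x :=
  Nat.le_findGreatest hmn h

theorem level_congr (h : trace B n y = trace B n x) : level B V n y = level B V n x := by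
  rw [level, level, h]

end Level

theorem mem_of_lt_level (hk : k < level B V n x) : x ∈ V k :=
  mem_iInter₂.1 (setOf_trace_eq_subset rfl) k hk

theorem level_le_of_notMem (hx : x ∉ V k) : level B V n x ≤ k :=
  not_lt.1 fun hk => hx (mem_of_lt_level hk)

theorem monotone_level : Monotone fun n => level B V n x :=
  monotone_nat_of_le_succ fun n => le_level (level_le.trans n.le_succ)
    fun _ hy => setOf_trace_eq_subset (trace_eq_of_le n.le_succ hy)

theorem eventuallyConst_level (hx : x ∉ V k) :
    EventuallyConst (fun n => level B V n x) atTop := by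
  have h := tendsto_atTop_ciSup monotone_level
    ⟨k, forall_mem_range.2 fun n => level_le_of_notMem (B := B) (n := n) hx⟩
  rw [nhds_discrete] at h
  exact .of_tendsto h

noncomputable def code (B V : ℕ → Set X) (x : X) (n : ℕ) : ℕ :=
  Encodable.encode (level B V n x, trace B (level B V n x) x)

theorem code_congr (h : trace B n y = trace B n x) : code B V y n = code B V x n := by
  rw [code, code, level_congr h, trace_eq_of_le level_le h]

theorem mem_iff_of_code_eq (h : code B V y n = code B V x n) (hi : i < level B V n x) :
    y ∈ B i ↔ x ∈ B i := by
  obtain ⟨hlevel, htrace⟩ := Prod.mk.inj (Encodable.encode_injective h)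
  rw [hlevel] at htrace
  exact trace_eq_iff.1 htrace i hi

theorem countable_image_code_compl : (code B V '' (⋂ k, V k)ᶜ).Countable :=
  countable_setOf_eventuallyConst.mono <| by
    rintro _ ⟨x, hx, rfl⟩
    obtain ⟨k, hk⟩ : ∃ k, x ∉ V k := by simpa using hx
    exact (eventuallyConst_level hk).comp fun l => Encodable.encode (l, trace B l x)

variable [TopologicalSpace X]

theorem tendsto_level (hB : IsTopologicalBasis (range B)) (hV : ∀ k, IsOpen (V k))
    (hx : ∀ k, x ∈ V k) : Tendsto (fun n => level B V n x) atTop atTop := by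
  refine tendsto_atTop.2 fun m => ?_
  obtain ⟨_, ⟨i, rfl⟩, hxi, hiV⟩ := hB.exists_subset_of_mem_open
    (mem_iInter₂.2 fun k _ => hx k) ((finite_lt_nat m).isOpen_biInter fun k _ => hV k)
  filter_upwards [eventually_gt_atTop i, eventually_ge_atTop m] with n hin hmn
  exact le_level hmn fun y hy => hiV ((trace_eq_iff.1 hy i hin).2 hxi)

theorem isLocallyConstant_trace (hB : ∀ i, IsClopen (B i)) (n : ℕ) :
    IsLocallyConstant (trace B n) :=
  (IsLocallyConstant.iff_eventually_eq _).2 fun x => by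
    filter_upwards [(eventually_all_finset (Finset.range n)).2 fun i _ =>
      (hB i).eventually_mem_iff x] with y hy
    exact trace_eq_iff.2 fun i hi => hy i (Finset.mem_range.2 hi)

theorem continuous_code (hB : ∀ i, IsClopen (B i)) : Continuous (code B V) :=
  continuous_pi fun n => IsLocallyConstant.continuous <|
    (IsLocallyConstant.iff_eventually_eq _).2 fun x =>
      ((isLocallyConstant_trace hB n).eventually_eq x).mono fun _ => code_congr

theorem comap_code_nhds_le (hB : IsTopologicalBasis (range B)) (hV : ∀ k, IsOpen (V k))
    (hx : ∀ k, x ∈ V k) : comap (code B V) (𝓝 (code B V x)) ≤ 𝓝 x := by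
  intro s hs
  obtain ⟨_, ⟨i, rfl⟩, hxi, his⟩ := hB.mem_nhds_iff.1 hs
  obtain ⟨N, hN⟩ := ((tendsto_level hB hV hx).eventually_gt_atTop i).exists
  have hcylinder : (fun u : ℕ → ℕ => u N) ⁻¹' {code B V x N} ∈ 𝓝 (code B V x) :=
    ((isOpen_discrete {code B V x N}).preimage (continuous_apply N)).mem_nhds rfl
  exact mem_comap.2 ⟨_, hcylinder, fun y hy => his ((mem_iff_of_code_eq hy hN).2 hxi)⟩

end ClopenCoding

open ClopenCoding in
/-- For every G_δ set `G` in a zero-dimensional compact metric space `X` there exist a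
compact metric space `Y` and a continuous surjection `φ : X → Y` restricting to a
homeomorphism on `G`, with `φ(X \ G) ∩ φ(G) = ∅` and `Y \ φ(G)` countable. -/
theorem stmt_8 (X : Type) [MetricSpace X] [CompactSpace X]
    (hzerodim : ∃ B : Set (Set X), (∀ s ∈ B, IsClopen s) ∧
      TopologicalSpace.IsTopologicalBasis B)
    (G : Set X) (hGδ : IsGδ G) :
    ∃ (Y : Type) (_ : MetricSpace Y) (_ : CompactSpace Y) (φ : X → Y),
      Continuous φ ∧ Function.Surjective φ ∧
      Topology.IsEmbedding (fun x : G => φ x) ∧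
      φ '' Gᶜ ∩ φ '' G = ∅ ∧
      Set.Countable (φ '' G)ᶜ := by
  obtain ⟨B, hBclopen, hB⟩ := exists_isClopen_nat_basis hzerodim
  obtain ⟨V, hV, rfl⟩ := isGδ_iff_eq_iInter_nat.1 hGδ
  have hf : Continuous (code B V) := continuous_code hBclopen
  let : MetricSpace (ℕ → ℕ) := PiNat.metricSpace
  set φ := rangeFactorization (code B V)
  have hφ : ∀ x ∈ ⋂ k, V k, comap φ (𝓝 (φ x)) ≤ 𝓝 x := fun x hx => by
    rw [nhds_subtype, comap_comap]
    exact comap_code_nhds_le hB hV (mem_iInter.1 hx)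
  refine ⟨range (code B V), inferInstance, isCompact_iff_compactSpace.1 (isCompact_range hf), φ,
    hf.rangeFactorization, rangeFactorization_surjective,
    isEmbedding_restrict_of_comap_nhds_le hf.rangeFactorization hφ,
    image_compl_inter_image_eq_empty hφ, ?_⟩
  refine ((countable_image_code_compl (B := B) (V := V)).preimage Subtype.val_injective).mono
    ((subset_image_compl rangeFactorization_surjective).trans ?_)
  rintro _ ⟨x, hx, rfl⟩
  exact ⟨x, hx, rfl⟩
end

section
/- Let X be a zero-dimensional compact metric space and let I be a σ-ideal on X. Let G ∈ I be a G_δ set and let φ : X → Y be a continuous surjection onto a compact metric space Y such that the restriction of φ to G is a homeomorphism of G onto φ(G), φ(X \ G) ∩ φ(G) = ∅, and Y \ φ(G) is countable. Then for every A ⊆ G such that φ is injective on the closure of A in X, the closure of A is a compact set belonging to I. -/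
open Cardinal

/-- Let `I` be a σ-ideal of Borel sets on a zero-dimensional compact metric space `X`,
let `G ∈ I` be a G_δ set and `φ : X → Y` a continuous surjection onto a compact metric
space restricting to a homeomorphism on `G`, with `φ(X \ G) ∩ φ(G) = ∅` and `Y \ φ(G)`
countable. Then for every `A ⊆ G` such that `φ` is injective on the closure of `A`,
the closure of `A` is a compact set belonging to `I`. -/
theorem stmt_9 (X : Type) [MetricSpace X] [CompactSpace X]
    [MeasurableSpace X] [BorelSpace X]
    (hzerodim : ∃ B : Set (Set X), (∀ s ∈ B, IsClopen s) ∧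
      TopologicalSpace.IsTopologicalBasis B)
    (I : Set (Set X))
    (hIBorel : ∀ s ∈ I, MeasurableSet s)
    (hIsing : ∀ x : X, {x} ∈ I)
    (hIsub : ∀ s ∈ I, ∀ t, t ⊆ s → MeasurableSet t → t ∈ I)
    (hIunion : ∀ f : ℕ → Set X, (∀ n, f n ∈ I) → (⋃ n, f n) ∈ I)
    (G : Set X) (hGδ : IsGδ G) (hGI : G ∈ I)
    (Y : Type) [MetricSpace Y] [CompactSpace Y] (φ : X → Y)
    (hφc : Continuous φ) (hφs : Function.Surjective φ)
    (hφG : Topology.IsEmbedding (fun x : G => φ x))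
    (hdisj : φ '' Gᶜ ∩ φ '' G = ∅)
    (hcount : Set.Countable (φ '' G)ᶜ) :
    ∀ A : Set X, A ⊆ G → Set.InjOn φ (closure A) →
      IsCompact (closure A) ∧ closure A ∈ I := by
  intro A hAG hinj
  refine ⟨isClosed_closure.isCompact, ?_⟩
  -- the part of the closure outside G is countable
  have hmaps : Set.MapsTo φ (closure A \ G) (φ '' G)ᶜ := by
    intro x hx
    intro hmem
    have : φ x ∈ φ '' Gᶜ ∩ φ '' G := ⟨⟨x, hx.2, rfl⟩, hmem⟩
    rw [hdisj] at this
    exact this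
  have hctble : (closure A \ G).Countable :=
    hmaps.countable_of_injOn (hinj.mono Set.diff_subset) hcount
  -- countable sets are in I
  have hcI : ∀ S : Set X, S.Countable → S ∈ I := by
    intro S hS
    rcases S.eq_empty_or_nonempty with rfl | hne
    · exact hIsub G hGI ∅ (Set.empty_subset _) MeasurableSet.empty
    · obtain ⟨g, rfl⟩ := hS.exists_eq_range hne
      have : Set.range g = ⋃ n, {g n} := by
        ext x; simp [Set.range]
      rw [this]
      exact hIunion _ fun n => hIsing _
  -- the part inside G is in I
  have h1 : closure A ∩ G ∈ I :=
    hIsub G hGI _ Set.inter_subset_right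
      (isClosed_closure.measurableSet.inter hGδ.measurableSet)
  have h2 : closure A \ G ∈ I := hcI _ hctble
  have hsplit : closure A = (closure A ∩ G) ∪ (closure A \ G) := by
    rw [Set.inter_union_diff]
  rw [hsplit]
  have := hIunion (fun n => if n = 0 then closure A ∩ G else closure A \ G)
    (fun n => by by_cases h : n = 0 <;> simp [h, h1, h2])
  convert this using 1
  ext x
  simp only [Set.mem_iUnion, Set.mem_union]
  constructor
  · rintro (h | h)
    · exact ⟨0, by simpa using h⟩
    · exact ⟨1, by simpa using h⟩
  · rintro ⟨n, h⟩
    by_cases hn : n = 0 <;> simp [hn] at h <;> tauto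
end

section
/- Assume that no family of fewer than 𝔠 meager subsets of ℝ covers ℝ (i.e., cov(ℳ) = 𝔠). Let 𝒦 be a family of compact zero-dimensional (equivalently, compact totally disconnected) subsets of [0,1]^ℕ with |𝒦| < 𝔠. Then the union ⋃𝒦, endowed with the subspace topology, is zero-dimensional, i.e., its topology has a base consisting of clopen sets. -/
open Cardinal

open Set Filter TopologicalSpace

/-!
Fix countably many Urysohn functions `u` of the compact metrizable space `X` (here the Hilbert
cube) separating points from closed sets. If each `u` is replaced by a continuous `f` with
`|f - u| ≤ 1/4` that omits the value `1/2` on `⋃₀ 𝒦`, the sets `{f < 1/2}` restrict to a clopen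
base of `⋃₀ 𝒦`.

The replacements come from one family `f_t = u + 8⁻¹ ∑ₖ aₖ(t) • q_{jₖ(t)}`, `t ∈ ℝ`, whose weights
and indices are read off the binary digits of `t`, where every function of the unit ball of
`C(X, ℝ)` is approximated infinitely often in the sequence `(q_j)`. Inside any dyadic interval of parameters
one can freeze the digits read so far and append a block of digits adding a prescribed small
multiple of an approximation of any given `h`. As `K` is compact and zero-dimensional, a suitable
`h` (`±1` on the two parts of a clopen partition of `K`) pushes the frozen head of the series away
from `1/2` on `K` by more than the tail can bring it back. Hence the parameters `t` for which `f_t`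
takes the value `1/2` on `K` form a nowhere dense set, and `cov(ℳ) = 𝔠` yields one `t` outside the
fewer than `𝔠` such sets.
-/

theorem exists_forall_half_le_abs_add_mul_sub {X : Type*} [TopologicalSpace X] [NormalSpace X]
    [T2Space X] {K : Set X} (hK : IsCompact K) (hKt : IsTotallyDisconnected K) {s : X → ℝ}
    (hs : Continuous s) {δ : ℝ} (hδ : 0 < δ) (c : ℝ) :
    ∃ h : C(X, ℝ), (∀ x, |h x| ≤ 1) ∧ ∀ x ∈ K, δ / 2 ≤ |s x + δ * h x - c| := by
  have : CompactSpace K := isCompact_iff_compactSpace.1 hK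
  have : TotallyDisconnectedSpace K := totallyDisconnectedSpace_subtype_iff.2 hKt
  have hsK : Continuous fun y : K => s y := hs.comp continuous_subtype_val
  obtain ⟨W, hW, hleW, hWlt⟩ := exists_clopen_of_closed_subset_open
    (isClosed_le hsK continuous_const) (isOpen_lt hsK continuous_const)
    fun y (hy : s y ≤ c) => show s y < c + δ / 2 by linarith
  let g : C(K, ℝ) :=
    ⟨fun y => 1 - 2 * W.indicator 1 y,
      continuous_const.sub (continuous_const.mul (hW.continuous_indicator continuous_const))⟩
  obtain ⟨h, hIcc, hg⟩ := g.exists_restrict_eq_forall_mem_of_closed (t := Icc (-1) 1)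
    (fun y => by by_cases hy : y ∈ W <;> norm_num [g, hy]) ⟨0, by norm_num⟩ hK.isClosed
  refine ⟨h, fun x => abs_le.2 (hIcc x), fun x hxK => ?_⟩
  have hx : h x = 1 - 2 * W.indicator 1 ⟨x, hxK⟩ := DFunLike.congr_fun hg ⟨x, hxK⟩
  by_cases hxW : ⟨x, hxK⟩ ∈ W
  · have : s x < c + δ / 2 := hWlt hxW
    rw [hx, indicator_of_mem hxW, Pi.one_apply, le_abs]
    right
    linarith
  · have : c < s x := lt_of_not_ge fun hle => hxW (hleW hle)
    rw [hx, indicator_of_notMem hxW, le_abs]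
    left
    linarith

theorem exists_seq_frequently_approx (X : Type*) [TopologicalSpace X] [CompactSpace X]
    [MetrizableSpace X] :
    ∃ q : ℕ → C(X, ℝ), (∀ j x, |q j x| ≤ 1) ∧
      ∀ h : C(X, ℝ), (∀ x, |h x| ≤ 1) → ∀ ε > 0, ∃ᶠ j in atTop, ∀ x, |q j x - h x| < ε := by
  have hball : ∀ f : C(X, ℝ), f ∈ Metric.closedBall 0 1 ↔ ∀ x, |f x| ≤ 1 := fun f => by
    simp [ContinuousMap.norm_le _ zero_le_one]
  obtain ⟨T, hTball, hTc, hdense⟩ :=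
    (IsSeparable.of_separableSpace (Metric.closedBall (0 : C(X, ℝ)) 1)).exists_countable_dense_subset
  obtain ⟨e, rfl⟩ := hTc.exists_eq_range
    (closure_nonempty_iff.1 ⟨0, hdense (Metric.mem_closedBall_self zero_le_one)⟩)
  -- each `e j` is repeated along the column `Nat.pair j ·`
  refine ⟨fun j => e (Nat.unpair j).1, fun j => (hball _).1 (hTball (mem_range_self _)),
    fun h hh ε hε => ?_⟩
  obtain ⟨_, ⟨j, rfl⟩, hj⟩ := Metric.mem_closure_iff.1 (hdense ((hball h).2 hh)) ε hε
  refine frequently_atTop.2 fun a => ⟨Nat.pair j a, Nat.right_le_pair j a, fun x => ?_⟩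
  show |e (Nat.unpair (Nat.pair j a)).1 x - h x| < ε
  rw [Nat.unpair_pair, ← Real.dist_eq, dist_comm]
  exact (ContinuousMap.dist_apply_le_dist x).trans_lt hj

theorem exists_countable_urysohn_family (X : Type*) [TopologicalSpace X] [NormalSpace X]
    [RegularSpace X] [SecondCountableTopology X] :
    ∃ U : Set C(X, ℝ), U.Countable ∧
      ∀ x O, IsOpen O → x ∈ O → ∃ u ∈ U, u x = 0 ∧ EqOn u 1 Oᶜ := by
  obtain ⟨ℬ, hℬc, -, hℬ⟩ := exists_countable_basis X
  let P := {p : Set X × Set X | p.1 ∈ ℬ ∧ p.2 ∈ ℬ ∧ closure p.1 ⊆ p.2}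
  have : Countable P :=
    ((hℬc.prod hℬc).mono fun p (hp : p ∈ P) => show p ∈ ℬ ×ˢ ℬ from ⟨hp.1, hp.2.1⟩).to_subtype
  have hury (p : P) : ∃ f : C(X, ℝ), EqOn f 0 (closure p.1.1) ∧ EqOn f 1 p.1.2ᶜ := by
    obtain ⟨f, hf0, hf1, -⟩ := exists_continuous_zero_one_of_isClosed isClosed_closure
      (hℬ.isOpen p.2.2.1).isClosed_compl (disjoint_compl_right_iff_subset.2 p.2.2.2)
    exact ⟨f, hf0, hf1⟩
  choose f hf0 hf1 using hury
  refine ⟨range f, countable_range f, fun x O hO hxO => ?_⟩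
  obtain ⟨W, hWℬ, hxW, hWO⟩ := hℬ.exists_subset_of_mem_open hxO hO
  obtain ⟨V, hVℬ, hxV, hVW⟩ := hℬ.exists_closure_subset (hℬ.mem_nhds hWℬ hxW)
  exact ⟨f ⟨(V, W), hVℬ, hWℬ, hVW⟩, mem_range_self _, hf0 _ (subset_closure hxV),
    (hf1 _).mono (compl_subset_compl.2 hWO)⟩

theorem exists_isClopen_basis_of_forall_ne {X ι : Type*} [TopologicalSpace X] {f : ι → X → ℝ}
    (hf : ∀ i, Continuous (f i)) {c : ℝ}
    (hsep : ∀ x O, IsOpen O → x ∈ O → ∃ i, f i x < c ∧ ∀ y, f i y < c → y ∈ O)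
    {Y : Set X} (hY : ∀ i, ∀ y ∈ Y, f i y ≠ c) :
    ∃ B : Set (Set Y), (∀ s ∈ B, IsClopen s) ∧ IsTopologicalBasis B := by
  have hfY (i : ι) : Continuous fun y : Y => f i y := (hf i).comp continuous_subtype_val
  have hopen (i : ι) : IsOpen {y : Y | f i y < c} := isOpen_lt (hfY i) continuous_const
  refine ⟨range fun i => {y : Y | f i y < c}, ?_, ?_⟩
  · rintro _ ⟨i, rfl⟩
    have hle : {y : Y | f i y < c} = {y : Y | f i y ≤ c} :=
      Set.ext fun y => (hY i y y.2).le_iff_lt.symm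
    refine ⟨?_, hopen i⟩
    simpa only [hle] using isClosed_le (hfY i) continuous_const
  · refine isTopologicalBasis_of_isOpen_of_nhds (by rintro _ ⟨i, rfl⟩; exact hopen i) ?_
    intro y V hyV hV
    obtain ⟨O, hO, rfl⟩ := isOpen_induced_iff.1 hV
    obtain ⟨i, hi, hiO⟩ := hsep y O hO hyV
    exact ⟨_, mem_range_self i, hi, fun z hz => hiO z hz⟩

universe u in
theorem exists_forall_notMem_of_mk_lt_continuum
    (covM : ∀ S : Set (Set ℝ), (∀ s ∈ S, IsMeagre s) → #S < continuum → ⋃₀ S ≠ Set.univ)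
    {ι : Type u} (hι : #ι < continuum) {s : ι → Set ℝ} (hs : ∀ i, IsMeagre (s i)) :
    ∃ t, ∀ i, t ∉ s i := by
  have hcard : #(range s) < continuum := by
    rw [← lift_lt_continuum.{0, u}]
    exact mk_range_le_lift.trans_lt (by rwa [lift_lt_continuum])
  obtain ⟨t, ht⟩ := (ne_univ_iff_exists_notMem _).1
    (covM (range s) (forall_mem_range.2 hs) hcard)
  exact ⟨t, fun i hi => ht (mem_sUnion_of_mem hi (mem_range_self i))⟩

namespace DyadicCode

/-- The binary digit of `t` in position `n + 1` after the point. -/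
noncomputable def binDigit (t : ℝ) (n : ℕ) : Bool := ⌊t * 2 ^ (n + 1)⌋ % 2 = 1

noncomputable def onesRun (t : ℝ) : ℕ → ℕ
  | 0 => 0
  | n + 1 => if binDigit t n then onesRun t n + 1 else 0

lemma onesRun_le (t : ℝ) : ∀ n, onesRun t n ≤ n
  | 0 => le_rfl
  | n + 1 => by
    unfold onesRun
    split
    · exact Nat.succ_le_succ (onesRun_le t n)
    · exact Nat.zero_le _

lemma floor_mul_two_pow_succ (t : ℝ) (n : ℕ) :
    ⌊t * 2 ^ (n + 1)⌋ = 2 * ⌊t * 2 ^ n⌋ + (binDigit t n).toNat := by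
  have half : ⌊t * 2 ^ n⌋ = ⌊t * 2 ^ (n + 1)⌋ / 2 := by
    have := Int.floor_div_natCast (t * 2 ^ (n + 1)) 2
    rw [show t * 2 ^ (n + 1) / ((2 : ℕ) : ℝ) = t * 2 ^ n by push_cast; ring] at this
    exact_mod_cast this
  unfold binDigit
  rw [half]
  by_cases h : ⌊t * 2 ^ (n + 1)⌋ % 2 = 1 <;>
    simp only [h, decide_true, decide_false, Bool.toNat_true, Bool.toNat_false, Nat.cast_one,
      Nat.cast_zero] <;> omega

lemma floor_mul_two_pow_succ_eq_iff {t : ℝ} {n : ℕ} {p : ℤ} {b : Bool} :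
    ⌊t * 2 ^ (n + 1)⌋ = 2 * p + b.toNat ↔ ⌊t * 2 ^ n⌋ = p ∧ binDigit t n = b := by
  rw [floor_mul_two_pow_succ]
  cases b <;> cases binDigit t n <;>
    simp only [Bool.toNat_true, Bool.toNat_false, Nat.cast_one, Nat.cast_zero, Bool.true_eq_false,
      Bool.false_eq_true, and_true, and_false, iff_false] <;> omega

lemma floor_mul_two_pow_eq_of_le {t t' : ℝ} {n N : ℕ} (h : ⌊t * 2 ^ N⌋ = ⌊t' * 2 ^ N⌋)
    (hn : n ≤ N) : ⌊t * 2 ^ n⌋ = ⌊t' * 2 ^ n⌋ := by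
  induction N with
  | zero => rwa [Nat.le_zero.mp hn]
  | succ N ih =>
    rcases hn.eq_or_lt with rfl | hlt
    · exact h
    · refine ih ?_ (Nat.le_of_lt_succ hlt)
      rw [floor_mul_two_pow_succ, floor_mul_two_pow_succ] at h
      have := Bool.toNat_le (binDigit t N)
      have := Bool.toNat_le (binDigit t' N)
      omega

lemma binDigit_eq_of_floor_eq {t t' : ℝ} {n N : ℕ} (h : ⌊t * 2 ^ N⌋ = ⌊t' * 2 ^ N⌋)
    (hn : n < N) : binDigit t n = binDigit t' n := by
  unfold binDigit
  rw [floor_mul_two_pow_eq_of_le h hn]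

lemma onesRun_eq_of_floor_eq {t t' : ℝ} {n N : ℕ} (h : ⌊t * 2 ^ N⌋ = ⌊t' * 2 ^ N⌋)
    (hn : n ≤ N) : onesRun t n = onesRun t' n := by
  induction n with
  | zero => rfl
  | succ n ih =>
    simp only [onesRun, binDigit_eq_of_floor_eq h hn, ih (Nat.le_of_succ_le hn)]

lemma onesRun_add_of_binDigit {t : ℝ} {n ℓ : ℕ} (h : ∀ i < ℓ, binDigit t (n + i) = true) :
    onesRun t (n + ℓ) = onesRun t n + ℓ := by
  induction ℓ with
  | zero => rfl
  | succ ℓ ih =>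
    rw [← add_assoc, onesRun, if_pos (h ℓ ℓ.lt_succ_self),
      ih fun i hi => h i (hi.trans ℓ.lt_succ_self), add_assoc]

lemma floor_and_binDigit_of_ones {t : ℝ} {n ℓ : ℕ} {p : ℤ}
    (h : ⌊t * 2 ^ (n + ℓ)⌋ = 2 ^ ℓ * (p + 1) - 1) :
    ⌊t * 2 ^ n⌋ = p ∧ ∀ i < ℓ, binDigit t (n + i) = true := by
  induction ℓ with
  | zero => simpa using h
  | succ ℓ ih =>
    have hcode : 2 ^ (ℓ + 1) * (p + 1) - 1 = 2 * (2 ^ ℓ * (p + 1) - 1) + (true).toNat := by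
      rw [Bool.toNat_true]; push_cast; ring
    rw [← add_assoc, hcode, floor_mul_two_pow_succ_eq_iff] at h
    obtain ⟨hfloor, hdigit⟩ := ih h.1
    refine ⟨hfloor, fun i hi => ?_⟩
    rcases (Nat.lt_succ_iff.mp hi).lt_or_eq with hi | rfl
    exacts [hdigit i hi, h.2]

/-- The dyadic code of the binary word `m 0 1⋯1 0` with `ℓ` ones. -/
def blockCode (m : ℤ) (ℓ : ℕ) : ℤ := 2 * (2 ^ ℓ * (2 * m + 1) - 1)

lemma floor_and_binDigit_of_floor_eq_blockCode {t : ℝ} {n ℓ : ℕ} {m : ℤ}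
    (h : ⌊t * 2 ^ (n + ℓ + 2)⌋ = blockCode m ℓ) :
    ⌊t * 2 ^ (n + 1)⌋ = 2 * m ∧ binDigit t n = false ∧
      (∀ i < ℓ, binDigit t (n + 1 + i) = true) ∧ binDigit t (n + 1 + ℓ) = false := by
  replace h : ⌊t * 2 ^ (n + 1 + ℓ + 1)⌋ = 2 * (2 ^ ℓ * (2 * m + 1) - 1) + (false).toNat := by
    rw [show n + 1 + ℓ + 1 = n + ℓ + 2 by omega, h, blockCode, Bool.toNat_false]; simp
  rw [floor_mul_two_pow_succ_eq_iff] at h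
  obtain ⟨hfloor, hdigits⟩ := floor_and_binDigit_of_ones (p := 2 * m) h.1
  have hm : ⌊t * 2 ^ (n + 1)⌋ = 2 * m + (false).toNat := by simpa using hfloor
  exact ⟨hfloor, (floor_mul_two_pow_succ_eq_iff.mp hm).2, hdigits, h.2⟩

/-- Only the `0` closing a block `1⋯1 0` of `ℓ` ones that starts at position `p` has a weight,
namely `2⁻¹ ^ p`; in `codedTerm` the length `ℓ` of the block selects the function `q ℓ`. -/
noncomputable def digitWeight (t : ℝ) (k : ℕ) : ℝ := if binDigit t k then 0 else 2⁻¹ ^ (k - onesRun t k)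

lemma digitWeight_nonneg (t : ℝ) (k : ℕ) : 0 ≤ digitWeight t k := by
  unfold digitWeight; split <;> positivity

lemma digitWeight_add_le (t : ℝ) (k : ℕ) :
    digitWeight t k + 2 * 2⁻¹ ^ (k + 1 - onesRun t (k + 1)) ≤ 2 * 2⁻¹ ^ (k - onesRun t k) := by
  have hrun := onesRun_le t k
  unfold digitWeight
  rw [onesRun]
  split
  · rw [show k + 1 - (onesRun t k + 1) = k - onesRun t k by omega, zero_add]
  · have hle : (2⁻¹ : ℝ) ^ k ≤ 2⁻¹ ^ (k - onesRun t k) :=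
      pow_le_pow_of_le_one (by norm_num) (by norm_num) (Nat.sub_le _ _)
    rw [Nat.sub_zero, pow_succ]
    linarith

lemma sum_range_digitWeight_add_le (t : ℝ) (n : ℕ) : ∀ M : ℕ,
    ∑ i ∈ Finset.range M, digitWeight t (n + i) + 2 * 2⁻¹ ^ (n + M - onesRun t (n + M)) ≤
      2 * 2⁻¹ ^ (n - onesRun t n)
  | 0 => by simp
  | M + 1 => by
    have := digitWeight_add_le t (n + M)
    have := sum_range_digitWeight_add_le t n M
    rw [Finset.sum_range_succ, ← add_assoc n M 1]
    linarith

lemma summable_digitWeight_add (t : ℝ) (n : ℕ) : Summable fun i => digitWeight t (n + i) :=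
  summable_of_sum_range_le (c := 2 * 2⁻¹ ^ (n - onesRun t n)) (fun _ => digitWeight_nonneg _ _)
    fun M => by
    have := sum_range_digitWeight_add_le t n M
    linarith [show (0 : ℝ) ≤ 2 * 2⁻¹ ^ (n + M - onesRun t (n + M)) by positivity]

lemma summable_digitWeight (t : ℝ) : Summable (digitWeight t) := by
  simpa using summable_digitWeight_add t 0

lemma tsum_digitWeight_add_le (t : ℝ) (n : ℕ) :
    ∑' i, digitWeight t (n + i) ≤ 2 * 2⁻¹ ^ (n - onesRun t n) :=
  (summable_digitWeight_add t n).tsum_le_of_sum_range_le fun M => by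
    have := sum_range_digitWeight_add_le t n M
    linarith [show (0 : ℝ) ≤ 2 * 2⁻¹ ^ (n + M - onesRun t (n + M)) by positivity]

variable {X : Type*} [TopologicalSpace X] {q : ℕ → C(X, ℝ)}

noncomputable def codedTerm (q : ℕ → C(X, ℝ)) (t : ℝ) (k : ℕ) (x : X) : ℝ :=
  digitWeight t k * q (onesRun t k) x

noncomputable def codedPerturbation (u : C(X, ℝ)) (q : ℕ → C(X, ℝ)) (t : ℝ) (x : X) : ℝ :=
  u x + 8⁻¹ * ∑' k, codedTerm q t k x

lemma codedTerm_eq_of_floor_eq {t t' : ℝ} {k N : ℕ} (h : ⌊t * 2 ^ N⌋ = ⌊t' * 2 ^ N⌋)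
    (hk : k < N) : codedTerm q t k = codedTerm q t' k := by
  unfold codedTerm digitWeight
  rw [binDigit_eq_of_floor_eq h hk, onesRun_eq_of_floor_eq h hk.le]

lemma codedTerm_of_binDigit {t : ℝ} {k : ℕ} (h : binDigit t k = true) (x : X) :
    codedTerm q t k x = 0 := by
  simp [codedTerm, digitWeight, h]

section bounded

variable (hq : ∀ j x, |q j x| ≤ 1)
include hq

lemma abs_codedTerm_le (t : ℝ) (k : ℕ) (x : X) : |codedTerm q t k x| ≤ digitWeight t k := by
  rw [codedTerm, abs_mul, abs_of_nonneg (digitWeight_nonneg t k)]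
  exact mul_le_of_le_one_right (digitWeight_nonneg t k) (hq _ x)

lemma summable_codedTerm (t : ℝ) (x : X) : Summable fun k => codedTerm q t k x :=
  .of_norm_bounded (summable_digitWeight t) fun _ => abs_codedTerm_le hq t _ x

lemma abs_tsum_codedTerm_add_le (t : ℝ) (x : X) (n : ℕ) :
    |∑' i, codedTerm q t (n + i) x| ≤ 2 * 2⁻¹ ^ (n - onesRun t n) := by
  rw [← Real.norm_eq_abs]
  exact (tsum_of_norm_bounded (summable_digitWeight_add t n).hasSum
    fun _ => abs_codedTerm_le hq t _ x).trans (tsum_digitWeight_add_le t n)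

lemma continuous_codedPerturbation (u : C(X, ℝ)) (t : ℝ) :
    Continuous (codedPerturbation u q t) :=
  u.continuous.add <| continuous_const.mul <|
    continuous_tsum (f := codedTerm q t) (fun _ => continuous_const.mul (q _).continuous)
      (summable_digitWeight t) (abs_codedTerm_le hq t)

lemma abs_codedPerturbation_sub_le (u : C(X, ℝ)) (t : ℝ) (x : X) :
    |codedPerturbation u q t x - u x| ≤ 4⁻¹ := by
  have := abs_tsum_codedTerm_add_le hq t x 0
  simp only [zero_add, onesRun] at this
  rw [codedPerturbation, add_sub_cancel_left, abs_mul, abs_of_pos (by norm_num : (0 : ℝ) < 8⁻¹)]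
  linarith

lemma abs_tsum_codedTerm_sub_le_of_floor_eq_blockCode {t : ℝ} {n ℓ : ℕ} {m : ℤ}
    (h : ⌊t * 2 ^ (n + ℓ + 2)⌋ = blockCode m ℓ) (x : X) :
    |∑' k, codedTerm q t k x - (∑ k ∈ Finset.range (n + 1), codedTerm q t k x +
      2⁻¹ ^ (n + 1) * q ℓ x)| ≤ 2⁻¹ ^ (n + ℓ + 1) := by
  obtain ⟨-, hzero, hones, hlast⟩ := floor_and_binDigit_of_floor_eq_blockCode h
  have hrun : onesRun t (n + 1 + ℓ) = ℓ := by
    rw [onesRun_add_of_binDigit hones, onesRun, hzero]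
    simp
  have hhead : ∑ k ∈ Finset.range (n + ℓ + 2), codedTerm q t k x =
      ∑ k ∈ Finset.range (n + 1), codedTerm q t k x + 2⁻¹ ^ (n + 1) * q ℓ x := by
    rw [show n + ℓ + 2 = n + 1 + (ℓ + 1) by omega, Finset.sum_range_add, Finset.sum_range_succ _ ℓ,
      Finset.sum_eq_zero fun i hi => codedTerm_of_binDigit (hones i (Finset.mem_range.1 hi)) x,
      zero_add]
    simp [codedTerm, digitWeight, hlast, hrun]
  have hrestart : onesRun t (n + ℓ + 2) = 0 := by
    rw [show n + ℓ + 2 = n + 1 + ℓ + 1 by omega, onesRun, hlast]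
    rfl
  have htail := abs_tsum_codedTerm_add_le hq t x (n + ℓ + 2)
  rw [hrestart, Nat.sub_zero] at htail
  rw [← (summable_codedTerm hq t x).sum_add_tsum_nat_add (n + ℓ + 2), hhead]
  simp only [add_sub_cancel_left, add_comm _ (n + ℓ + 2)]
  exact htail.trans_eq (by ring)

end bounded

def dyadicCell (N : ℕ) (z : ℤ) : Set ℝ := {t | ⌊t * 2 ^ N⌋ = z}

lemma interior_dyadicCell_nonempty (N : ℕ) (z : ℤ) : (interior (dyadicCell N z)).Nonempty := by
  have hpos : (0 : ℝ) < 2 ^ N := by positivity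
  have hIoo : Ioo (z / 2 ^ N : ℝ) ((z + 1) / 2 ^ N) ⊆ dyadicCell N z := fun t ht => by
    rw [mem_Ioo, div_lt_iff₀ hpos, lt_div_iff₀ hpos] at ht
    exact Int.floor_eq_iff.2 ⟨ht.1.le, ht.2⟩
  refine (nonempty_Ioo.2 ?_).mono (isOpen_Ioo.subset_interior_iff.2 hIoo)
  gcongr
  linarith

lemma exists_dyadicCell_subset {U : Set ℝ} (hU : IsOpen U) (hne : U.Nonempty) :
    ∃ N z, dyadicCell N z ⊆ U := by
  obtain ⟨x, hx⟩ := hne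
  obtain ⟨ε, hε, hball⟩ := Metric.isOpen_iff.1 hU x hx
  obtain ⟨N, hN⟩ := exists_pow_lt_of_lt_one hε (by norm_num : (2⁻¹ : ℝ) < 1)
  refine ⟨N, ⌊x * 2 ^ N⌋, fun t ht => hball ?_⟩
  have hclose := Int.abs_sub_lt_one_of_floor_eq_floor (show ⌊t * 2 ^ N⌋ = ⌊x * 2 ^ N⌋ from ht)
  rw [← sub_mul, abs_mul, abs_of_pos (by positivity : (0 : ℝ) < 2 ^ N),
    ← lt_div_iff₀ (by positivity), one_div, ← inv_pow] at hclose
  exact hclose.trans hN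

lemma isNowhereDense_of_forall_dyadicCell {s : Set ℝ}
    (h : ∀ N z, ∃ N' z', dyadicCell N' z' ⊆ dyadicCell N z ∧ Disjoint (dyadicCell N' z') s) :
    IsNowhereDense s := by
  by_contra hs
  obtain ⟨N, z, hcell⟩ :=
    exists_dyadicCell_subset isOpen_interior (nonempty_iff_ne_empty.2 hs)
  obtain ⟨N', z', hsub, hdisj⟩ := h N z
  obtain ⟨t, ht⟩ := interior_dyadicCell_nonempty N' z'
  exact ((hdisj.mono_left interior_subset).closure_right isOpen_interior).notMem_of_mem_left ht
    (interior_subset (hcell (hsub (interior_subset ht))))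

section avoidance

variable [NormalSpace X] [T2Space X] (hq : ∀ j x, |q j x| ≤ 1)
  (hqd : ∀ h : C(X, ℝ), (∀ x, |h x| ≤ 1) → ∃ᶠ j in atTop, ∀ x, |q j x - h x| < 8⁻¹)
  {K : Set X} (hK : IsCompact K) (hKt : IsTotallyDisconnected K) (u : C(X, ℝ)) (c : ℝ)
include hq hqd hK hKt

lemma exists_dyadicCell_subset_forall_ne (n : ℕ) (m : ℤ) :
    ∃ N z, dyadicCell N z ⊆ dyadicCell n m ∧
      ∀ t ∈ dyadicCell N z, ∀ x ∈ K, codedPerturbation u q t x ≠ c := by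
  have hm : ⌊(m / 2 ^ n : ℝ) * 2 ^ (n + 1)⌋ = 2 * m := by
    rw [show (m / 2 ^ n : ℝ) * 2 ^ (n + 1) = ((2 * m : ℤ) : ℝ) by push_cast; field_simp; ring,
      Int.floor_intCast]
  -- `S` is the head of the coded series of every `t` with `⌊t * 2 ^ (n + 1)⌋ = 2 * m`
  set S : X → ℝ := fun x => ∑ k ∈ Finset.range (n + 1), codedTerm q (m / 2 ^ n) k x
  have hS : Continuous S :=
    continuous_finsetSum _ fun k _ => continuous_const.mul (q _).continuous
  obtain ⟨h, hh, hfar⟩ := exists_forall_half_le_abs_add_mul_sub hK hKt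
    (s := fun x => u x + 8⁻¹ * S x) (u.continuous.add (continuous_const.mul hS))
    (by positivity : (0 : ℝ) < 8⁻¹ * 2⁻¹ ^ (n + 1)) c
  obtain ⟨ℓ, hℓ, hqℓ⟩ := (hqd h hh).forall_exists_of_atTop 2
  refine ⟨n + ℓ + 2, blockCode m ℓ, fun t ht => ?_, fun t ht x hx hc => ?_⟩
  · have hfloor : ⌊t * 2 ^ (n + 1)⌋ = 2 * m + (false).toNat := by
      simpa using (floor_and_binDigit_of_floor_eq_blockCode ht).1
    exact (floor_mul_two_pow_succ_eq_iff.1 hfloor).1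
  · have hhead : ∑ k ∈ Finset.range (n + 1), codedTerm q t k x = S x :=
      Finset.sum_congr rfl fun k hk => congrFun (codedTerm_eq_of_floor_eq
        ((floor_and_binDigit_of_floor_eq_blockCode ht).1.trans hm.symm) (Finset.mem_range.1 hk)) x
    have hseries := abs_tsum_codedTerm_sub_le_of_floor_eq_blockCode hq ht x
    rw [hhead] at hseries
    have htail : (2⁻¹ : ℝ) ^ (n + ℓ + 1) ≤ 2⁻¹ ^ (n + 1) * 4⁻¹ := by
      rw [show n + ℓ + 1 = n + 1 + ℓ by omega, pow_add]
      gcongr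
      calc (2⁻¹ : ℝ) ^ ℓ ≤ 2⁻¹ ^ 2 := pow_le_pow_of_le_one (by norm_num) (by norm_num) hℓ
        _ = 4⁻¹ := by norm_num
    have happrox : |2⁻¹ ^ (n + 1) * (q ℓ x - h x)| ≤ 2⁻¹ ^ (n + 1) * 8⁻¹ := by
      rw [abs_mul, abs_of_pos (by positivity)]
      exact mul_le_mul_of_nonneg_left (hqℓ x).le (by positivity)
    have hfar := hfar x hx
    unfold codedPerturbation at hc
    rw [abs_le] at hseries happrox
    rw [le_abs] at hfar
    have hP : (0 : ℝ) < 2⁻¹ ^ (n + 1) := by positivity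
    -- with `δ = 8⁻¹ * 2⁻¹ ^ (n + 1)`: `|f_t x - c| ≥ δ / 2 - δ / 8 - δ / 4 > 0`
    rcases hfar with hfar | hfar <;> linarith

lemma isNowhereDense_setOf_codedPerturbation_eq :
    IsNowhereDense {t | ∃ x ∈ K, codedPerturbation u q t x = c} :=
  isNowhereDense_of_forall_dyadicCell fun n m => by
    obtain ⟨N, z, hsub, hne⟩ := exists_dyadicCell_subset_forall_ne hq hqd hK hKt u c n m
    exact ⟨N, z, hsub, disjoint_left.2 fun t ht ⟨x, hx, hc⟩ => hne t ht x hx hc⟩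

end avoidance

end DyadicCode

open DyadicCode in
theorem exists_isClopen_basis_sUnion_of_mk_lt_continuum {X : Type*} [TopologicalSpace X]
    [CompactSpace X] [MetrizableSpace X]
    (covM : ∀ S : Set (Set ℝ), (∀ s ∈ S, IsMeagre s) → #S < continuum → ⋃₀ S ≠ Set.univ)
    (𝒦 : Set (Set X)) (h𝒦card : #𝒦 < continuum)
    (h𝒦 : ∀ K ∈ 𝒦, IsCompact K ∧ IsTotallyDisconnected K) :
    ∃ B : Set (Set (⋃₀ 𝒦 : Set X)), (∀ s ∈ B, IsClopen s) ∧ IsTopologicalBasis B := by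
  obtain ⟨q, hq, hqd⟩ := exists_seq_frequently_approx X
  obtain ⟨U, hUc, hU⟩ := exists_countable_urysohn_family X
  have : Countable U := hUc.to_subtype
  have hcard : #(𝒦 × U) < continuum := by
    rw [mk_prod, lift_id, lift_id]
    exact mul_lt_of_lt aleph0_le_continuum h𝒦card (mk_le_aleph0.trans_lt aleph0_lt_continuum)
  obtain ⟨t, ht⟩ := exists_forall_notMem_of_mk_lt_continuum covM hcard
    (s := fun p => {t | ∃ x ∈ p.1.1, codedPerturbation p.2.1 q t x = 2⁻¹}) fun p =>
      (isNowhereDense_setOf_codedPerturbation_eq hq (fun h hh => hqd h hh _ (by norm_num))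
        (h𝒦 _ p.1.2).1 (h𝒦 _ p.1.2).2 _ _).isMeagre
  refine exists_isClopen_basis_of_forall_ne (f := fun u : U => codedPerturbation u.1 q t)
    (fun u => continuous_codedPerturbation hq _ _) (fun x O hO hxO => ?_)
    fun u y ⟨K, hK, hyK⟩ hy => ht (⟨K, hK⟩, u) ⟨y, hyK, hy⟩
  obtain ⟨u, hu, hux, huO⟩ := hU x O hO hxO
  refine ⟨⟨u, hu⟩, ?_, fun y hy => by_contra fun hyO => ?_⟩
  · have := abs_codedPerturbation_sub_le hq u t x
    rw [abs_le, hux] at this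
    linarith
  · have := abs_codedPerturbation_sub_le hq u t y
    rw [abs_le, huO hyO] at this
    simp only [Pi.one_apply] at this
    linarith [show codedPerturbation u q t y < 2⁻¹ from hy]

/-- Assuming `cov(ℳ) = 𝔠`, the union of fewer than `𝔠` compact zero-dimensional subsets
of the Hilbert cube `[0,1]^ℕ` is zero-dimensional (its subspace topology has a base of
clopen sets). -/
theorem stmt_13
    (covM : ∀ S : Set (Set ℝ), (∀ s ∈ S, IsMeagre s) → #S < continuum →
      ⋃₀ S ≠ Set.univ)
    (𝒦 : Set (Set (ℕ → unitInterval))) (h𝒦card : #𝒦 < continuum)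
    (h𝒦 : ∀ K ∈ 𝒦, IsCompact K ∧ IsTotallyDisconnected K) :
    ∃ B : Set (Set (⋃₀ 𝒦 : Set (ℕ → unitInterval))),
      (∀ s ∈ B, IsClopen s) ∧ TopologicalSpace.IsTopologicalBasis B :=
  exists_isClopen_basis_sUnion_of_mk_lt_continuum covM 𝒦 h𝒦card h𝒦
end

section
/- Let K be a compact zero-dimensional (equivalently, compact totally disconnected) subset of [0,1]^ℕ. Then the set 𝒰_K = {f ∈ C([0,1]^ℕ, ℝ) : f(x) ≠ 0 for all x ∈ K} is open and dense in the space C([0,1]^ℕ, ℝ) of continuous real-valued functions on [0,1]^ℕ equipped with the topology of uniform convergence (the supremum metric). -/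
open Cardinal

/-- For every compact zero-dimensional set `K` in the Hilbert cube `[0,1]^ℕ`, the set
`𝒰_K` of continuous real-valued functions on `[0,1]^ℕ` that do not vanish on `K` is open
and dense in `C([0,1]^ℕ, ℝ)` with the topology of uniform convergence. -/
theorem stmt_14 (K : Set (ℕ → unitInterval)) (hKcomp : IsCompact K)
    (hKzero : IsTotallyDisconnected K) :
    IsOpen {f : C(ℕ → unitInterval, ℝ) | ∀ x ∈ K, f x ≠ 0} ∧
    Dense {f : C(ℕ → unitInterval, ℝ) | ∀ x ∈ K, f x ≠ 0} := by
  classical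
  constructor
  · -- Openness
    rw [Metric.isOpen_iff]
    intro f hf
    rcases K.eq_empty_or_nonempty with hK | hK
    · exact ⟨1, one_pos, fun g _ x hx => by simp [hK] at hx⟩
    · obtain ⟨x₀, hx₀, hmin⟩ := hKcomp.exists_isMinOn hK
        ((continuous_abs.comp (map_continuous f)).continuousOn)
      have hm : 0 < |f x₀| := abs_pos.mpr (hf x₀ hx₀)
      refine ⟨|f x₀|, hm, fun g hg x hx => ?_⟩
      intro hgx
      have h1 : dist (g x) (f x) ≤ dist g f := ContinuousMap.dist_apply_le_dist x
      have h2 : |f x₀| ≤ |f x| := hmin hx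
      rw [Metric.mem_ball] at hg
      have : |f x| < |f x₀| := by
        calc |f x| = dist (g x) (f x) := by rw [hgx]; simp [Real.dist_eq, abs_sub_comm]
          _ ≤ dist g f := h1
          _ < |f x₀| := hg
      linarith
  · -- Density
    rw [Metric.dense_iff]
    intro f ε hε
    haveI : CompactSpace K := isCompact_iff_compactSpace.mp hKcomp
    haveI : TotallyDisconnectedSpace K :=
      totallyDisconnectedSpace_subtype_iff.mpr hKzero
    have hKclosed : IsClosed K := hKcomp.isClosed
    set fK : C(K, ℝ) := f.restrict K with hfK
    -- U : points of K where |f| < ε/2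
    set U : Set K := {x | |fK x| < ε / 2} with hU
    have hUopen : IsOpen U :=
      isOpen_lt (continuous_abs.comp (map_continuous fK)) continuous_const
    -- A : the zero set of f in K
    set A : Set K := {x | fK x = 0} with hA
    have hAU : A ⊆ U := fun x hx => by
      simp only [hU, Set.mem_setOf_eq]
      rw [hx.out, abs_zero]
      positivity
    have hAclosed : IsClosed A := isClosed_eq (map_continuous fK) continuous_const
    have hAcomp : IsCompact A := hAclosed.isCompact
    -- for each x ∈ A, a clopen neighborhood inside U
    have hV : ∀ x ∈ A, ∃ V : Set K, IsClopen V ∧ x ∈ V ∧ V ⊆ U := fun x hx =>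
      compact_exists_isClopen_in_isOpen hUopen (hAU hx)
    choose! V hVclopen hVmem hVU using hV
    obtain ⟨b, hbA, hbfin, hbcover⟩ := hAcomp.elim_finite_subcover_image
      (fun x hx => (hVclopen x hx).2)
      (fun x hx => Set.mem_biUnion hx (hVmem x hx))
    set W : Set K := ⋃ x ∈ b, V x with hW
    have hWclopen : IsClopen W := hbfin.isClopen_biUnion fun x hx => hVclopen x (hbA hx)
    have hWU : W ⊆ U := Set.iUnion₂_subset fun x hx => hVU x (hbA hx)
    have hAW : A ⊆ W := hbcover
    -- the indicator function of W times ε/2, as a continuous map on K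
    set h : C(K, ℝ) :=
      ⟨W.indicator fun _ => ε / 2,
        continuous_indicator (by simp [hWclopen]) continuous_const.continuousOn⟩ with hh
    have hmem : ∀ x : K, h x ∈ Set.Icc (0 : ℝ) (ε / 2) := fun x => by
      by_cases hx : x ∈ W <;> simp [hh, Set.indicator_apply, hx] <;> positivity
    -- Tietze extension
    obtain ⟨g, hgmem, hgres⟩ :=
      ContinuousMap.exists_restrict_eq_forall_mem_of_closed h hmem
        (Set.nonempty_Icc.mpr (by positivity)) hKclosed
    have hgval : ∀ x : K, g (x : ℕ → unitInterval) = h x := fun x => by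
      have := DFunLike.congr_fun hgres x
      simpa using this
    refine ⟨f + g, ?_, ?_⟩
    · -- distance < ε
      rw [Metric.mem_ball, ContinuousMap.dist_lt_iff hε]
      intro x
      have := hgmem x
      simp only [ContinuousMap.add_apply, Real.dist_eq]
      have hgb : |g x| ≤ ε / 2 := abs_le.mpr ⟨by linarith [(hgmem x).1], (hgmem x).2⟩
      rw [show f x + g x - f x = g x from by ring]
      linarith
    · -- nonvanishing on K
      intro x hx
      set xK : K := ⟨x, hx⟩ with hxK
      simp only [ContinuousMap.add_apply]
      have hgx : g x = h xK := hgval xK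
      by_cases hxW : xK ∈ W
      · have hhx : h xK = ε / 2 := by simp [hh, Set.indicator_apply, hxW]
        have hfx : |fK xK| < ε / 2 := hWU hxW
        have hfx' : |f x| < ε / 2 := by simpa [hfK] using hfx
        rw [hgx, hhx]
        have := abs_lt.mp hfx'
        intro hcontra
        linarith [this.1]
      · have hhx : h xK = 0 := by simp [hh, Set.indicator_apply, hxW]
        have hfx : fK xK ≠ 0 := fun h0 => hxW (hAW h0)
        have hfx' : f x ≠ 0 := by simpa [hfK] using hfx
        rw [hgx, hhx, add_zero]
        exact hfx'
end

section
/- Let X be a separable metrizable space. Then X is completely metrizable (i.e., X is a Polish space) if and only if there exists a sequence of continuous functions f_n : X → [0,1] with f_0 ≥ f_1 ≥ f_2 ≥ ⋯ pointwise, converging pointwise to 0 on X, such that for every set A ⊆ X on which the sequence (f_n) converges uniformly, the closure of A in X is compact. -/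
open Filter Metric Set Topology TopologicalSpace
open UniformSpace (Completion)
open scoped BoundedContinuousFunction

/-!
For a Polish `X` with a complete metric and a dense sequence `u`, take
`fₙ x = min 1 (dist(x, {u₀, …, uₙ}))`: uniform smallness of `fₙ` on `A` says that `A` lies in a
small neighbourhood of a finite set, so `A` is totally bounded and its closure is compact.

Conversely, the Dini-type estimate for a decreasing null sequence makes
`x ↦ (fₙ x)ₙ` continuous into `ℓ^∞`, so `x ↦ (x, (fₙ x)ₙ)` embeds `X` into the complete space
`X̂ × ℓ^∞`, where `X̂` is the completion for some compatible metric. The image is closed: if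
`(xₖ, (fₙ xₖ)ₙ)` converges, then `(fₙ)` converges uniformly on `{xₖ}`, whose closure is then
compact, and a limit point of `(xₖ)` in `X` accounts for the limit.
-/

section truncInfDist

variable {X : Type*} [PseudoMetricSpace X] (u : ℕ → X)

noncomputable def truncInfDist (n : ℕ) (x : X) : ℝ :=
  min 1 (infDist x (u '' Iic n))

theorem continuous_truncInfDist (n : ℕ) : Continuous (truncInfDist u n) :=
  continuous_const.min (continuous_infDist_pt _)

theorem truncInfDist_mem_Icc (n : ℕ) (x : X) : truncInfDist u n x ∈ Icc (0 : ℝ) 1 :=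
  ⟨le_min zero_le_one infDist_nonneg, min_le_left _ _⟩

theorem truncInfDist_le_dist {i n : ℕ} (h : i ≤ n) (x : X) : truncInfDist u n x ≤ dist x (u i) :=
  (min_le_right _ _).trans (infDist_le_dist_of_mem (mem_image_of_mem u h))

theorem truncInfDist_succ_le (n : ℕ) (x : X) : truncInfDist u (n + 1) x ≤ truncInfDist u n x :=
  min_le_min_left 1 <| infDist_le_infDist_of_subset
    (image_mono (Iic_subset_Iic.2 n.le_succ)) ⟨u 0, mem_image_of_mem u (Nat.zero_le n)⟩

variable {u}

theorem tendsto_truncInfDist (hu : DenseRange u) (x : X) :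
    Tendsto (fun n => truncInfDist u n x) atTop (𝓝 0) := by
  refine Metric.tendsto_atTop.2 fun ε hε => ?_
  obtain ⟨i, hi⟩ := Metric.denseRange_iff.1 hu x ε hε
  refine ⟨i, fun n hn => ?_⟩
  rw [Real.dist_0_eq_abs, abs_of_nonneg (truncInfDist_mem_Icc u n x).1]
  exact (truncInfDist_le_dist u hn x).trans_lt hi

theorem totallyBounded_of_tendstoUniformlyOn_truncInfDist {A : Set X}
    (hA : TendstoUniformlyOn (truncInfDist u) (fun _ => 0) atTop A) : TotallyBounded A := by
  refine Metric.totallyBounded_iff.2 fun ε hε => ?_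
  obtain ⟨n, hn⟩ := (Metric.tendstoUniformlyOn_iff.1 hA (min ε 1) (lt_min hε one_pos)).exists
  refine ⟨u '' Iic n, (finite_Iic n).image u, fun x hx => ?_⟩
  have hsmall : infDist x (u '' Iic n) < ε := by
    have := hn x hx
    rw [dist_zero_left, Real.norm_eq_abs, abs_of_nonneg (truncInfDist_mem_Icc u n x).1,
      truncInfDist] at this
    rcases min_lt_iff.1 this with h | h
    · exact absurd h (min_le_right ε 1).not_gt
    · exact h.trans_le (min_le_left ε 1)
  obtain ⟨y, hy, hxy⟩ := (infDist_lt_iff ⟨u 0, mem_image_of_mem u (Nat.zero_le n)⟩).1 hsmall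
  exact mem_biUnion hy (mem_ball.2 hxy)

end truncInfDist

section boundedSeq

variable {X : Type*} {f : ℕ → X → ℝ}

noncomputable def boundedSeq (hf : ∀ n x, f n x ∈ Icc (0 : ℝ) 1) (x : X) : ℕ →ᵇ ℝ :=
  .mkOfDiscrete (f · x) 1 fun n m => Real.dist_le_of_mem_Icc_01 (hf n x) (hf m x)

@[simp]
theorem boundedSeq_apply (hf : ∀ n x, f n x ∈ Icc (0 : ℝ) 1) (x : X) (n : ℕ) :
    boundedSeq hf x n = f n x :=
  rfl

/-- Beyond an index `N` with `f N x < ε / 4`, both `f n x` and `f n y` lie in `[0, ε / 2]`;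
below it, continuity of the finitely many `f n` does the job. -/
theorem continuous_boundedSeq [TopologicalSpace X] (hf : ∀ n x, f n x ∈ Icc (0 : ℝ) 1)
    (hcont : ∀ n, Continuous (f n)) (hanti : ∀ n x, f (n + 1) x ≤ f n x)
    (htend : ∀ x, Tendsto (f · x) atTop (𝓝 0)) :
    Continuous (boundedSeq hf) := by
  have hmono : ∀ x, Antitone (f · x) := fun x => antitone_nat_of_succ_le (hanti · x)
  refine Metric.continuous_iff'.2 fun x ε hε => ?_
  obtain ⟨N, hN⟩ := ((htend x).eventually_lt_const (by positivity : 0 < ε / 4)).exists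
  have hnear : ∀ᶠ y in 𝓝 x, ∀ n ∈ {n | n ≤ N}, dist (f n y) (f n x) < ε / 4 :=
    (finite_le_nat N).eventually_all.2 fun n _ =>
      Metric.continuous_iff'.1 (hcont n) x _ (by positivity)
  filter_upwards [hnear] with y hy
  refine ((BoundedContinuousFunction.dist_le (by positivity)).2 fun n => ?_).trans_lt
    (half_lt_self hε)
  rw [boundedSeq_apply, boundedSeq_apply]
  rcases le_total n N with hn | hn
  · exact (hy n hn).le.trans (by linarith)
  · have hNy : f N y < ε / 2 := by
      have := hy N le_rfl
      rw [Real.dist_eq, abs_lt] at this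
      linarith
    have hNx : f N x ≤ ε / 2 := by linarith
    rw [Real.dist_eq]
    exact abs_sub_le_of_nonneg_of_le (hf n y).1 ((hmono y hn).trans hNy.le) (hf n x).1
      ((hmono x hn).trans hNx)

theorem tendstoUniformlyOn_range_of_cauchySeq_boundedSeq (hf : ∀ n x, f n x ∈ Icc (0 : ℝ) 1)
    (htend : ∀ x, Tendsto (f · x) atTop (𝓝 0)) {x : ℕ → X}
    (hx : CauchySeq (boundedSeq hf ∘ x)) :
    TendstoUniformlyOn f (fun _ => 0) atTop (range x) := by
  refine Metric.tendstoUniformlyOn_iff.2 fun ε hε => ?_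
  obtain ⟨K, hK⟩ := Metric.cauchySeq_iff'.1 hx (ε / 2) (half_pos hε)
  have hhead : ∀ᶠ n in atTop, ∀ k ∈ {k | k ≤ K}, dist (f n (x k)) 0 < ε / 2 :=
    (finite_le_nat K).eventually_all.2 fun k _ =>
      Metric.tendsto_nhds.1 (htend (x k)) _ (half_pos hε)
  filter_upwards [hhead] with n hn
  rintro - ⟨k, rfl⟩
  rw [dist_comm]
  rcases le_total k K with hk | hk
  · exact (hn k hk).trans (half_lt_self hε)
  · have hkK : dist (f n (x k)) (f n (x K)) < ε / 2 :=
      (BoundedContinuousFunction.dist_coe_le_dist n).trans_lt (hK k hk)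
    calc dist (f n (x k)) 0 ≤ dist (f n (x k)) (f n (x K)) + dist (f n (x K)) 0 :=
          dist_triangle _ _ _
      _ < ε / 2 + ε / 2 := add_lt_add hkK (hn K le_rfl)
      _ = ε := add_halves ε

end boundedSeq

theorem isClosedEmbedding_coe_prod_boundedSeq {X : Type*} [MetricSpace X] {f : ℕ → X → ℝ}
    (hf : ∀ n x, f n x ∈ Icc (0 : ℝ) 1) (hcont : ∀ n, Continuous (f n))
    (hanti : ∀ n x, f (n + 1) x ≤ f n x) (htend : ∀ x, Tendsto (f · x) atTop (𝓝 0))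
    (hcomp : ∀ A : Set X, TendstoUniformlyOn f (fun _ => 0) atTop A → IsCompact (closure A)) :
    IsClosedEmbedding fun x : X => ((x : Completion X), boundedSeq hf x) := by
  have hΦ : Continuous fun x : X => ((x : Completion X), boundedSeq hf x) :=
    (Completion.continuous_coe X).prodMk (continuous_boundedSeq hf hcont hanti htend)
  refine ⟨.of_comp hΦ continuous_fst Completion.isDenseEmbedding_coe.isEmbedding,
    IsSeqClosed.isClosed fun {z} {p} hz hlim => ?_⟩
  choose x hx using hz
  obtain rfl : z = fun k => ((x k : Completion X), boundedSeq hf (x k)) :=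
    funext fun k => (hx k).symm
  have hcauchy : CauchySeq (boundedSeq hf ∘ x) :=
    ((continuous_snd.tendsto p).comp hlim).cauchySeq
  obtain ⟨y, -, φ, hφ, hy⟩ :=
    (hcomp _ (tendstoUniformlyOn_range_of_cauchySeq_boundedSeq hf htend hcauchy)).tendsto_subseq
      fun k => subset_closure (mem_range_self k)
  exact ⟨y, tendsto_nhds_unique ((hΦ.tendsto y).comp hy) (hlim.comp hφ.tendsto_atTop)⟩

/-- A separable metrizable space `X` is completely metrizable (Polish) iff there is a
pointwise decreasing sequence of continuous functions `fₙ : X → [0,1]` converging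
pointwise to `0` such that every set on which the convergence is uniform has compact
closure. -/
theorem stmt_15 (X : Type) [TopologicalSpace X] [TopologicalSpace.MetrizableSpace X]
    [TopologicalSpace.SeparableSpace X] :
    PolishSpace X ↔
      ∃ f : ℕ → X → ℝ,
        (∀ n, Continuous (f n)) ∧
        (∀ n x, f n x ∈ Set.Icc (0 : ℝ) 1) ∧
        (∀ n x, f (n + 1) x ≤ f n x) ∧
        (∀ x, Tendsto (fun n => f n x) atTop (nhds 0)) ∧
        ∀ A : Set X, TendstoUniformlyOn f (fun _ => 0) atTop A →
          IsCompact (closure A) := by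
  constructor
  · intro _
    rcases isEmpty_or_nonempty X with hX | hX
    · exact ⟨0, fun _ => continuous_const, by simp, by simp, fun _ => tendsto_const_nhds,
        fun A _ => (toFinite _).isCompact⟩
    let := upgradeIsCompletelyMetrizable X
    exact ⟨truncInfDist (denseSeq X), continuous_truncInfDist _, truncInfDist_mem_Icc _,
      truncInfDist_succ_le _, tendsto_truncInfDist (denseRange_denseSeq X), fun A hA =>
        (totallyBounded_of_tendstoUniformlyOn_truncInfDist hA).closure.isCompact_of_isClosed
          isClosed_closure⟩
  · rintro ⟨f, hcont, hf, hanti, htend, hcomp⟩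
    let := metrizableSpaceMetric X
    have := (isClosedEmbedding_coe_prod_boundedSeq hf hcont hanti htend
      hcomp).IsCompletelyMetrizableSpace
    infer_instance
end

section
/- Let X be a Hausdorff topological space, let Y be a Polish space, and let p : X → Y be a perfect surjection, i.e., p is continuous, p is a closed map, and p⁻¹(K) is compact for every compact set K ⊆ Y. Then there exists a sequence of continuous functions f_n : X → [0,1] with f_0 ≥ f_1 ≥ f_2 ≥ ⋯ pointwise, converging pointwise to 0 on X, such that every closed set A ⊆ X on which the sequence (f_n) converges uniformly is compact. -/
/-!
Fix a sequence `u` with dense range in `Y` (metrized as a complete metric space) and let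
`fₙ x = min 1 (dist (p x) {u 0, …, u n})`. These functions decrease to `0` because the range of
`u` is dense. If they tend to `0` uniformly on `A`, then for each `ε` some finite set
`{u 0, …, u N}` is an `ε`-net of `p '' A`, so `p '' A` is totally bounded; its closure is then
compact, and `A` is a closed subset of the compact preimage of that closure.
-/

open Filter Metric Set Topology

theorem tendstoUniformlyOn_image_iff {ι X Y β : Type*} [UniformSpace β] {F : ι → Y → β}
    {f : Y → β} {l : Filter ι} {p : X → Y} {A : Set X} :
    TendstoUniformlyOn F f l (p '' A) ↔ TendstoUniformlyOn (fun i => F i ∘ p) (f ∘ p) l A := by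
  simp only [TendstoUniformlyOn, forall_mem_image, Function.comp_apply]

theorem isCompact_of_totallyBounded_image {X Y : Type*} [TopologicalSpace X] [UniformSpace Y]
    [CompleteSpace Y] {p : X → Y} (hpk : ∀ K : Set Y, IsCompact K → IsCompact (p ⁻¹' K))
    {A : Set X} (hA : IsClosed A) (hpA : TotallyBounded (p '' A)) : IsCompact A :=
  (hpk _ (hpA.closure.isCompact_of_isClosed isClosed_closure)).of_isClosed_subset hA
    fun _ hx => subset_closure (mem_image_of_mem p hx)

section CappedInfDistPrefix

variable {Y : Type*} [PseudoMetricSpace Y] (u : ℕ → Y)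

noncomputable def cappedInfDistPrefix (n : ℕ) (y : Y) : ℝ :=
  min 1 (infDist y (u '' Iic n))

theorem continuous_cappedInfDistPrefix (n : ℕ) : Continuous (cappedInfDistPrefix u n) :=
  continuous_const.min (continuous_infDist_pt _)

theorem cappedInfDistPrefix_mem_Icc (n : ℕ) (y : Y) : cappedInfDistPrefix u n y ∈ Icc 0 1 :=
  ⟨le_min zero_le_one infDist_nonneg, min_le_left _ _⟩

theorem cappedInfDistPrefix_succ_le (n : ℕ) (y : Y) :
    cappedInfDistPrefix u (n + 1) y ≤ cappedInfDistPrefix u n y :=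
  min_le_min le_rfl <| infDist_le_infDist_of_subset
    (image_mono (Iic_subset_Iic.2 n.le_succ)) ⟨u 0, mem_image_of_mem u (Nat.zero_le n)⟩

variable {u}

theorem tendsto_cappedInfDistPrefix (hu : DenseRange u) (y : Y) :
    Tendsto (fun n => cappedInfDistPrefix u n y) atTop (𝓝 0) := by
  refine tendsto_order.2 ⟨fun a ha => Eventually.of_forall fun n =>
    ha.trans_le (cappedInfDistPrefix_mem_Icc u n y).1, fun ε hε => ?_⟩
  obtain ⟨k, hk⟩ := hu.exists_dist_lt y hε
  filter_upwards [eventually_ge_atTop k] with n hn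
  calc cappedInfDistPrefix u n y ≤ infDist y (u '' Iic n) := min_le_right _ _
    _ ≤ dist y (u k) := infDist_le_dist_of_mem (mem_image_of_mem u hn)
    _ < ε := hk

theorem totallyBounded_of_tendstoUniformlyOn_cappedInfDistPrefix {S : Set Y}
    (hS : TendstoUniformlyOn (cappedInfDistPrefix u) (fun _ => 0) atTop S) : TotallyBounded S := by
  refine totallyBounded_iff.2 fun ε hε => ?_
  obtain ⟨N, hN⟩ := (tendstoUniformlyOn_iff.1 hS (min ε 1) (lt_min hε one_pos)).exists
  refine ⟨u '' Iic N, (finite_Iic N).image u, fun y hy => ?_⟩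
  have hlt : cappedInfDistPrefix u N y < min ε 1 := by
    simpa [abs_of_nonneg (cappedInfDistPrefix_mem_Icc u N y).1] using hN y hy
  have hdist : infDist y (u '' Iic N) < ε :=
    ((min_lt_iff.1 hlt).resolve_left (min_le_right ε 1).not_gt).trans_le (min_le_left ε 1)
  obtain ⟨z, hz, hyz⟩ := (infDist_lt_iff ⟨u 0, mem_image_of_mem u (Nat.zero_le N)⟩).1 hdist
  exact mem_biUnion hz (mem_ball.2 hyz)

end CappedInfDistPrefix

theorem stmt_16_general (X : Type) [TopologicalSpace X]
    (Y : Type) [TopologicalSpace Y] [PolishSpace Y]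
    (p : X → Y) (hpc : Continuous p)
    (hpk : ∀ K : Set Y, IsCompact K → IsCompact (p ⁻¹' K)) :
    ∃ f : ℕ → X → ℝ,
      (∀ n, Continuous (f n)) ∧
      (∀ n x, f n x ∈ Set.Icc (0 : ℝ) 1) ∧
      (∀ n x, f (n + 1) x ≤ f n x) ∧
      (∀ x, Tendsto (fun n => f n x) atTop (nhds 0)) ∧
      ∀ A : Set X, IsClosed A → TendstoUniformlyOn f (fun _ => 0) atTop A →
        IsCompact A := by
  let := TopologicalSpace.upgradeIsCompletelyMetrizable Y
  rcases isEmpty_or_nonempty X with _ | ⟨⟨x₀⟩⟩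
  · exact ⟨0, fun _ => continuous_const, fun _ _ => ⟨le_rfl, zero_le_one⟩, fun _ _ => le_rfl,
      fun _ => tendsto_const_nhds, fun A _ _ => A.toFinite.isCompact⟩
  have : Nonempty Y := ⟨p x₀⟩
  obtain ⟨u, hu⟩ := TopologicalSpace.exists_dense_seq Y
  refine ⟨fun n => cappedInfDistPrefix u n ∘ p,
    fun n => (continuous_cappedInfDistPrefix u n).comp hpc,
    fun n x => cappedInfDistPrefix_mem_Icc u n (p x),
    fun n x => cappedInfDistPrefix_succ_le u n (p x),
    fun x => tendsto_cappedInfDistPrefix hu (p x), fun A hA hunif => ?_⟩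
  exact isCompact_of_totallyBounded_image hpk hA
    (totallyBounded_of_tendstoUniformlyOn_cappedInfDistPrefix
      (tendstoUniformlyOn_image_iff.2 hunif))

/-- If a Hausdorff space `X` admits a perfect surjection onto a Polish space, then there
is a pointwise decreasing sequence of continuous functions `fₙ : X → [0,1]` converging
pointwise to `0` such that every closed set on which the convergence is uniform is
compact. -/
theorem stmt_16 (X : Type) [TopologicalSpace X] [T2Space X]
    (Y : Type) [TopologicalSpace Y] [PolishSpace Y]
    (p : X → Y) (hps : Function.Surjective p) (hpc : Continuous p)
    (hpcl : IsClosedMap p) (hpk : ∀ K : Set Y, IsCompact K → IsCompact (p ⁻¹' K)) :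
    ∃ f : ℕ → X → ℝ,
      (∀ n, Continuous (f n)) ∧
      (∀ n x, f n x ∈ Set.Icc (0 : ℝ) 1) ∧
      (∀ n x, f (n + 1) x ≤ f n x) ∧
      (∀ x, Tendsto (fun n => f n x) atTop (nhds 0)) ∧
      ∀ A : Set X, IsClosed A → TendstoUniformlyOn f (fun _ => 0) atTop A →
        IsCompact A :=
  stmt_16_general X Y p hpc hpk
end

section
/- Let X be a Hausdorff topological space and suppose there exists a sequence of continuous functions f_n : X → [0,1] with f_0 ≥ f_1 ≥ f_2 ≥ ⋯ pointwise, converging pointwise to 0 on X, such that every closed set A ⊆ X on which the sequence (f_n) converges uniformly is compact. Then there exist a Polish space Y and a perfect surjection p : X → Y, i.e., a continuous closed map of X onto Y such that p⁻¹(K) is compact for every compact K ⊆ Y. (Indeed, the diagonal map F = (f_0, f_1, …) : X → [0,1]^ℕ is perfect onto its image F(X), which is a G_δ subset of [0,1]^ℕ.) -/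
/-! The diagonal map `swap f : X → (ℕ → ℝ)` is perfect onto its range. If `y → 0` lies in the
closure of `swap f '' C` with `C` closed, approximate `y` by `swap f (u j)` with `u j ∈ C`: since
the `fₙ` decrease, `fₙ → 0` uniformly on the `u j`, so their closure is compact and a cluster point
of `u` is a preimage of `y` in `C`. This makes the corestriction closed and, with the compactness
of the fibres, proper; it also shows that the range is the G_δ set of points of its closure
that tend to `0`, hence Polish. -/

open Filter Topology Function

/-- `⋂ n, U n` embeds diagonally into the Polish space `∀ n, U n`, with closed image. -/
theorem IsGδ.polishSpace {α : Type*} [TopologicalSpace α] [PolishSpace α] {s : Set α}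
    (hs : IsGδ s) : PolishSpace s := by
  obtain ⟨U, hUo, rfl⟩ := isGδ_iff_eq_iInter_nat.1 hs
  have := fun n => (hUo n).polishSpace
  let φ : (⋂ n, U n : Set α) → ∀ n, U n := fun x n => ⟨x, Set.mem_iInter.1 x.2 n⟩
  have hφ : Continuous φ := continuous_pi fun n => continuous_subtype_val.subtype_mk _
  have hrange : Set.range φ = ⋂ n, {u | (u n : α) = u 0} := by
    refine Set.Subset.antisymm (Set.range_subset_iff.2 fun x => Set.mem_iInter.2 fun n => rfl)
      fun u hu => ?_
    have hu0 : ∀ n, (u n : α) = u 0 := fun n => Set.mem_iInter.1 hu n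
    exact ⟨⟨u 0, Set.mem_iInter.2 fun n => hu0 n ▸ (u n).2⟩,
      funext fun n => Subtype.ext (hu0 n).symm⟩
  refine IsClosedEmbedding.polishSpace (f := φ)
    ⟨.of_comp hφ (continuous_apply 0) (.inclusion (Set.iInter_subset U 0)), ?_⟩
  rw [hrange]
  exact isClosed_iInter fun n =>
    isClosed_eq (continuous_subtype_val.comp (continuous_apply n))
      (continuous_subtype_val.comp (continuous_apply 0))

section DecreasingSequence

variable {X : Type*} {f : ℕ → X → ℝ}

theorem tendstoUniformlyOn_zero_of_antitone (hanti : ∀ x, Antitone (f · x))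
    (hnonneg : ∀ n x, 0 ≤ f n x) {S : Set X} (h : ∀ ε > 0, ∃ m, ∀ x ∈ S, f m x ≤ ε) :
    TendstoUniformlyOn f (fun _ => 0) atTop S := by
  rw [Metric.tendstoUniformlyOn_iff]
  intro ε hε
  obtain ⟨m, hm⟩ := h (ε / 2) (half_pos hε)
  filter_upwards [eventually_ge_atTop m] with n hn x hx
  rw [dist_zero_left, Real.norm_of_nonneg (hnonneg n x)]
  linarith [hanti x hn, hm x hx]

theorem exists_forall_le_of_tendsto_swap_comp (hanti : ∀ x, Antitone (f · x))
    (hto0 : ∀ x, Tendsto (f · x) atTop (𝓝 0)) {u : ℕ → X} {y : ℕ → ℝ}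
    (hu : Tendsto (swap f ∘ u) atTop (𝓝 y)) (hy : Tendsto y atTop (𝓝 0)) {ε : ℝ} (hε : 0 < ε) :
    ∃ m, ∀ j, f m (u j) ≤ ε := by
  obtain ⟨N, hN⟩ := (hy.eventually (gt_mem_nhds hε)).exists
  obtain ⟨J, hJ⟩ := eventually_atTop.1 <|
    ((continuous_apply N).tendsto y).comp hu |>.eventually (gt_mem_nhds hN)
  have hhead : ∀ᶠ m in atTop, ∀ j ∈ Set.Iio J, f m (u j) < ε :=
    (Set.finite_Iio J).eventually_all.2 fun j _ => (hto0 (u j)).eventually (gt_mem_nhds hε)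
  obtain ⟨m, hmN, hm⟩ := ((eventually_ge_atTop N).and hhead).exists
  refine ⟨m, fun j => ?_⟩
  rcases lt_or_ge j J with hj | hj
  · exact (hm j hj).le
  · exact (hanti (u j) hmN).trans (hJ j hj).le

variable [TopologicalSpace X] (hfc : ∀ n, Continuous (f n)) (hanti : ∀ x, Antitone (f · x))
  (hto0 : ∀ x, Tendsto (f · x) atTop (𝓝 0))
  (hcomp : ∀ A : Set X, IsClosed A → TendstoUniformlyOn f (fun _ => 0) atTop A → IsCompact A)
include hfc hanti hto0 hcomp

theorem swap_mem_image_of_mem_closure_image {C : Set X} (hC : IsClosed C) {y : ℕ → ℝ}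
    (hyC : y ∈ closure (swap f '' C)) (hy : Tendsto y atTop (𝓝 0)) : y ∈ swap f '' C := by
  obtain ⟨v, hvC, hvy⟩ := mem_closure_iff_seq_limit.1 hyC
  choose u huC hu using hvC
  obtain rfl : swap f ∘ u = v := funext hu
  set A := closure (Set.range u)
  have hA : IsCompact A := by
    refine hcomp A isClosed_closure <| tendstoUniformlyOn_zero_of_antitone hanti
      (fun n x => (hanti x).le_of_tendsto (hto0 x) n) fun ε hε => ?_
    obtain ⟨m, hm⟩ := exists_forall_le_of_tendsto_swap_comp hanti hto0 hvy hy hε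
    exact ⟨m, closure_minimal (Set.range_subset_iff.2 hm) (isClosed_le (hfc m) continuous_const)⟩
  obtain ⟨x, hxA, hx⟩ := hA.exists_mapClusterPt (u := u) (f := atTop)
    (principal_mono.2 subset_closure |>.trans' (by simp))
  have hFx := hx.continuousAt_comp (continuous_pi hfc).continuousAt
  exact ⟨x, closure_minimal (Set.range_subset_iff.2 huC) hC hxA,
    eq_of_nhds_neBot (ClusterPt.mono hFx hvy).neBot⟩

/-- Points of the closure of the range are antitone and nonnegative, so for them tending to `0`
is the G_δ condition `∀ k, ∃ m, z m < 1 / (k + 1)`. -/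
theorem isGδ_range_swap : IsGδ (Set.range (swap f)) := by
  have hrange : Set.range (swap f) =
      closure (Set.range (swap f)) ∩ ⋂ k : ℕ, ⋃ m, {z : ℕ → ℝ | z m < 1 / (k + 1)} := by
    refine Set.Subset.antisymm (fun _ ⟨x, hx⟩ => ⟨subset_closure ⟨x, hx⟩, ?_⟩) ?_
    · subst hx
      exact Set.mem_iInter.2 fun k => Set.mem_iUnion.2
        ((hto0 x).eventually (gt_mem_nhds (by positivity))).exists
    rintro z ⟨hzcl, hz⟩
    have hzanti : Antitone z :=
      closure_minimal (Set.range_subset_iff.2 hanti) isClosed_antitone hzcl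
    have hznonneg : z ∈ Set.Ici 0 := closure_minimal (Set.range_subset_iff.2 fun x =>
      show 0 ≤ swap f x from fun n => (hanti x).le_of_tendsto (hto0 x) n) isClosed_Ici hzcl
    have hz0 : Tendsto z atTop (𝓝 0) := by
      refine tendsto_order.2 ⟨fun a ha => .of_forall fun n => ha.trans_le (hznonneg n), ?_⟩
      intro b hb
      obtain ⟨k, hk⟩ := exists_nat_one_div_lt hb
      obtain ⟨m, hm⟩ := Set.mem_iUnion.1 (Set.mem_iInter.1 hz k)
      filter_upwards [eventually_ge_atTop m] with n hn
      exact ((hzanti hn).trans_lt hm).trans hk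
    obtain ⟨x, -, hx⟩ := swap_mem_image_of_mem_closure_image hfc hanti hto0 hcomp isClosed_univ
      (by rwa [Set.image_univ]) hz0
    exact ⟨x, hx⟩
  rw [hrange]
  exact isClosed_closure.isGδ.inter <| .iInter fun k =>
    (isOpen_iUnion fun m => isOpen_lt (continuous_apply m) continuous_const).isGδ

theorem isClosedMap_rangeFactorization_swap : IsClosedMap (Set.rangeFactorization (swap f)) := by
  intro C hC
  refine isClosed_induced_iff.2 ⟨closure (swap f '' C), isClosed_closure, ?_⟩
  ext ⟨z, x₀, rfl⟩
  refine ⟨fun hz => ?_, ?_⟩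
  · obtain ⟨x, hxC, hx⟩ := swap_mem_image_of_mem_closure_image hfc hanti hto0 hcomp hC hz (hto0 x₀)
    exact ⟨x, hxC, Subtype.ext hx⟩
  · rintro ⟨x, hxC, hx⟩
    exact subset_closure ⟨x, hxC, congrArg Subtype.val hx⟩

theorem isProperMap_rangeFactorization_swap : IsProperMap (Set.rangeFactorization (swap f)) := by
  have hcont : Continuous (Set.rangeFactorization (swap f)) :=
    (continuous_pi hfc).subtype_mk _
  refine isProperMap_iff_isClosedMap_and_compact_fibers.2
    ⟨hcont, isClosedMap_rangeFactorization_swap hfc hanti hto0 hcomp, ?_⟩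
  rintro ⟨_, x₀, rfl⟩
  refine hcomp _ (isClosed_singleton.preimage hcont) <| tendstoUniformlyOn_zero_of_antitone hanti
    (fun n x => (hanti x).le_of_tendsto (hto0 x) n) fun ε hε => ?_
  obtain ⟨m, hm⟩ := ((hto0 x₀).eventually (ge_mem_nhds hε)).exists
  exact ⟨m, fun x hx => (congrFun (congrArg Subtype.val hx) m).trans_le hm⟩

end DecreasingSequence

theorem stmt_17_general (X : Type) [TopologicalSpace X]
    (f : ℕ → X → ℝ)
    (hfc : ∀ n, Continuous (f n))
    (hfdec : ∀ n x, f (n + 1) x ≤ f n x)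
    (hfto0 : ∀ x, Tendsto (fun n => f n x) atTop (nhds 0))
    (hfcomp : ∀ A : Set X, IsClosed A → TendstoUniformlyOn f (fun _ => 0) atTop A →
      IsCompact A) :
    ∃ (Y : Type) (tY : TopologicalSpace Y) (p : X → Y),
      @PolishSpace Y tY ∧ Function.Surjective p ∧ @Continuous _ _ _ tY p ∧
      @IsClosedMap _ _ _ tY p ∧
      ∀ K : Set Y, @IsCompact _ tY K → IsCompact (p ⁻¹' K) := by
  have hanti : ∀ x, Antitone (f · x) := fun x => antitone_nat_of_succ_le (hfdec · x)
  have hp := isProperMap_rangeFactorization_swap hfc hanti hfto0 hfcomp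
  exact ⟨Set.range (swap f), inferInstance, Set.rangeFactorization (swap f),
    (isGδ_range_swap hfc hanti hfto0 hfcomp).polishSpace, Set.rangeFactorization_surjective,
    hp.continuous, hp.isClosedMap, fun _ hK => hp.isCompact_preimage hK⟩

/-- If a Hausdorff space `X` carries a pointwise decreasing sequence of continuous
functions `fₙ : X → [0,1]` converging pointwise to `0` such that every closed set on which
the convergence is uniform is compact, then there exist a Polish space `Y` and a perfect
surjection `p : X → Y`. -/
theorem stmt_17 (X : Type) [TopologicalSpace X] [T2Space X]
    (f : ℕ → X → ℝ)
    (hfc : ∀ n, Continuous (f n))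
    (hfI : ∀ n x, f n x ∈ Set.Icc (0 : ℝ) 1)
    (hfdec : ∀ n x, f (n + 1) x ≤ f n x)
    (hfto0 : ∀ x, Tendsto (fun n => f n x) atTop (nhds 0))
    (hfcomp : ∀ A : Set X, IsClosed A → TendstoUniformlyOn f (fun _ => 0) atTop A →
      IsCompact A) :
    ∃ (Y : Type) (tY : TopologicalSpace Y) (p : X → Y),
      @PolishSpace Y tY ∧ Function.Surjective p ∧ @Continuous _ _ _ tY p ∧
      @IsClosedMap _ _ _ tY p ∧
      ∀ K : Set Y, @IsCompact _ tY K → IsCompact (p ⁻¹' K) :=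
  stmt_17_general X f hfc hfdec hfto0 hfcomp
end

section
/- If there exists a Lusin set of cardinality 𝔠 in P, the space of irrational numbers of [0,1], then C_8(𝔠, ℵ₁) holds: there exist a set E ⊆ ℝ of cardinality 𝔠 and a continuous function f : E → ℝ which is not uniformly continuous on any uncountable subset of E. -/
/-!
Enumerate the rationals as `q 0, q 1, …` and let `F x = ∑_{q n ≤ x} 2⁻ⁿ`. The series converges
uniformly and each term is locally constant away from `q n`, so `F` is continuous at every
irrational; and `F` jumps by at least `2⁻ⁿ` across `q n`. Take `E` to be the Lusin set `T` and
`f = F` on it. An uncountable `A ⊆ T` is not nowhere dense in `P`, so its closure contains an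
interval; a rational `q n` in that interval is approached from both sides by points of `A`, and
the jump `2⁻ⁿ` at `q n` rules out uniform continuity of `f` on `A`.
-/

open Cardinal

open Set

noncomputable def jumpFn (q : ℕ → ℝ) (x : ℝ) : ℝ :=
  ∑' n, if q n ≤ x then (1 / 2 : ℝ) ^ n else 0

section jumpFn

variable (q : ℕ → ℝ)

lemma abs_jumpFn_term_le (n : ℕ) (x : ℝ) :
    |if q n ≤ x then (1 / 2 : ℝ) ^ n else 0| ≤ (1 / 2 : ℝ) ^ n := by
  split_ifs <;> simp

lemma summable_jumpFn_term (x : ℝ) :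
    Summable fun n ↦ if q n ≤ x then (1 / 2 : ℝ) ^ n else 0 :=
  summable_geometric_two.of_norm_bounded (abs_jumpFn_term_le q · x)

lemma jumpFn_add_le {x y : ℝ} {n : ℕ} (hx : x < q n) (hy : q n ≤ y) :
    jumpFn q x + (1 / 2 : ℝ) ^ n ≤ jumpFn q y := by
  have hmono : ∀ m, 0 ≤ (if q m ≤ y then (1 / 2 : ℝ) ^ m else 0) -
      (if q m ≤ x then (1 / 2 : ℝ) ^ m else 0) := fun m ↦ by
    by_cases hm : q m ≤ x
    · simp [hm, hm.trans (hx.le.trans hy)]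
    · split_ifs <;> simp
  have hn := ((summable_jumpFn_term q y).sub (summable_jumpFn_term q x)).le_tsum n
    fun m _ ↦ hmono m
  rw [Summable.tsum_sub (summable_jumpFn_term q y) (summable_jumpFn_term q x),
    if_pos hy, if_neg (not_le.2 hx)] at hn
  unfold jumpFn
  linarith

lemma continuousAt_jumpFn_term {n : ℕ} {x : ℝ} (hx : x ≠ q n) :
    ContinuousAt (fun y ↦ if q n ≤ y then (1 / 2 : ℝ) ^ n else 0) x := by
  rcases hx.lt_or_gt with hlt | hgt
  · refine (continuousAt_const (y := (0 : ℝ))).congr ?_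
    filter_upwards [Iio_mem_nhds hlt] with y hy using (if_neg (not_le.2 hy)).symm
  · refine (continuousAt_const (y := (1 / 2 : ℝ) ^ n)).congr ?_
    filter_upwards [Ioi_mem_nhds hgt] with y hy using (if_pos hy.le).symm

lemma continuousOn_jumpFn : ContinuousOn (jumpFn q) (range q)ᶜ :=
  continuousOn_tsum
    (fun n _ hx ↦ (continuousAt_jumpFn_term q fun h ↦ hx ⟨n, h.symm⟩).continuousWithinAt)
    summable_geometric_two fun n x _ ↦ abs_jumpFn_term_le q n x

end jumpFn

lemma mem_closure_inter_Iio_of_Ioo_subset_closure {s : Set ℝ} {a b c : ℝ}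
    (h : Ioo a b ⊆ closure s) (hc : c ∈ Ioo a b) : c ∈ closure (s ∩ Iio c) := by
  have : Ioo a c ⊆ closure (s ∩ Iio c) := fun z hz ↦
    isOpen_Iio.closure_inter ⟨h ⟨hz.1, hz.2.trans hc.2⟩, hz.2⟩
  refine closure_minimal this isClosed_closure ?_
  rw [closure_Ioo hc.1.ne]
  exact right_mem_Icc.2 hc.1.le

lemma mem_closure_inter_Ioi_of_Ioo_subset_closure {s : Set ℝ} {a b c : ℝ}
    (h : Ioo a b ⊆ closure s) (hc : c ∈ Ioo a b) : c ∈ closure (s ∩ Ioi c) := by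
  have : Ioo c b ⊆ closure (s ∩ Ioi c) := fun z hz ↦
    isOpen_Ioi.closure_inter ⟨h ⟨hc.1.trans hz.1, hz.2⟩, hz.1⟩
  refine closure_minimal this isClosed_closure ?_
  rw [closure_Ioo hc.2.ne]
  exact left_mem_Icc.2 hc.2.le

lemma not_uniformContinuousOn_domRestrict_of_jump {E : Set ℝ} {g : ℝ → ℝ} {A : Set E} {c ε : ℝ}
    (hε : 0 < ε) (hjump : ∀ x y, x < c → c < y → g x + ε ≤ g y)
    (hleft : c ∈ closure (Subtype.val '' A ∩ Iio c))
    (hright : c ∈ closure (Subtype.val '' A ∩ Ioi c)) :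
    ¬UniformContinuousOn (E.domRestrict g) A := by
  intro hg
  obtain ⟨δ, hδ, hg⟩ := Metric.uniformContinuousOn_iff.1 hg ε hε
  obtain ⟨_, ⟨⟨x, hxA, rfl⟩, hxc⟩, hx⟩ := Metric.mem_closure_iff.1 hleft (δ / 2) (half_pos hδ)
  obtain ⟨_, ⟨⟨y, hyA, rfl⟩, hyc⟩, hy⟩ := Metric.mem_closure_iff.1 hright (δ / 2) (half_pos hδ)
  have hxy : dist x y < δ := by
    rw [Subtype.dist_eq]
    linarith [dist_triangle_left (x : ℝ) y c]
  have hgxy : |g x - g y| < ε := hg x hxA y hyA hxy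
  linarith [hjump x y hxc hyc, (abs_lt.1 hgxy).1]

lemma nonempty_interior_closure_of_lusin {X : Type*} [TopologicalSpace X] {T A : Set X}
    (hT : ∀ D : Set X, IsClosed D → interior D = ∅ → (T ∩ D).Countable) (hAT : A ⊆ T)
    (hA : ¬A.Countable) : (interior (closure A)).Nonempty := by
  by_contra h
  exact hA ((hT _ isClosed_closure (not_nonempty_iff_eq_empty.1 h)).mono
    (subset_inter hAT subset_closure))

lemma exists_Ioo_subset_closure_image {A : Set IrrP} (h : (interior (closure A)).Nonempty) :
    ∃ a b, a < b ∧ Ioo a b ⊆ closure (Subtype.val '' A) := by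
  obtain ⟨p, hp⟩ := h
  obtain ⟨V, hVopen, hV⟩ := isOpen_induced_iff.1 (isOpen_interior (s := closure A))
  have hp01 : (p : ℝ) ∈ Ioo 0 1 :=
    ⟨p.2.1.1.lt_of_ne' p.2.2.ne_zero, p.2.1.2.lt_of_ne p.2.2.ne_one⟩
  obtain ⟨a, b, hpab, hab⟩ := mem_nhds_iff_exists_Ioo_subset.1 <|
    (hVopen.inter isOpen_Ioo).mem_nhds ⟨show p ∈ Subtype.val ⁻¹' V from hV ▸ hp, hp01⟩
  refine ⟨a, b, hpab.1.trans hpab.2, ?_⟩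
  have hirr : Ioo a b ∩ {x | Irrational x} ⊆ closure (Subtype.val '' A) := by
    rintro z ⟨hz, hzirr⟩
    have hzP : z ∈ IrrP := ⟨Ioo_subset_Icc_self (hab hz).2, hzirr⟩
    have : (⟨z, hzP⟩ : IrrP) ∈ interior (closure A) := hV ▸ (hab hz).1
    exact closure_subtype.1 (interior_subset this)
  exact (dense_irrational.open_subset_closure_inter isOpen_Ioo).trans
    (closure_minimal hirr isClosed_closure)

lemma exists_Ioo_subset_closure_of_lusin {T : Set IrrP}
    (hT : ∀ D : Set IrrP, IsClosed D → interior D = ∅ → (T ∩ D).Countable) {B : Set ℝ}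
    (hBT : B ⊆ Subtype.val '' T) (hB : ¬B.Countable) :
    ∃ a b, a < b ∧ Ioo a b ⊆ closure B := by
  have hB' : Subtype.val '' (Subtype.val ⁻¹' B : Set IrrP) = B :=
    image_preimage_eq_of_subset (hBT.trans (image_subset_range _ _))
  have hAT : (Subtype.val ⁻¹' B : Set IrrP) ⊆ T := fun z hz ↦
    Subtype.val_injective.mem_set_image.1 (hBT hz)
  have hA : ¬(Subtype.val ⁻¹' B : Set IrrP).Countable := fun h ↦ hB (hB' ▸ h.image _)
  simpa only [hB'] using
    exists_Ioo_subset_closure_image (nonempty_interior_closure_of_lusin hT hAT hA)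

/-- If there is a Lusin set of cardinality `𝔠` in the irrationals of `[0,1]`, then
`C_8(𝔠, ℵ₁)` holds: there are a set `E ⊆ ℝ` of cardinality `𝔠` and a continuous function
`f : E → ℝ` which is not uniformly continuous on any uncountable subset of `E`. -/
theorem stmt_18
    (hLusin : ∃ T : Set IrrP, #T = continuum ∧ aleph 0 < #T ∧
      ∀ D : Set IrrP, IsClosed D → interior D = ∅ → (T ∩ D).Countable) :
    ∃ (E : Set ℝ) (f : E → ℝ), #E = continuum ∧ Continuous f ∧
      ∀ A : Set E, aleph 0 < #A → ¬ UniformContinuousOn f A := by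
  obtain ⟨T, hTcard, -, hT⟩ := hLusin
  set q : ℕ → ℝ := fun n ↦ ((Denumerable.eqv ℚ).symm n : ℝ)
  have hTirr : Subtype.val '' T ⊆ (range q)ᶜ := by
    rintro _ ⟨t, -, rfl⟩ ⟨n, hn⟩
    exact t.2.2 ⟨_, hn⟩
  refine ⟨Subtype.val '' T, (Subtype.val '' T).domRestrict (jumpFn q), ?_,
    ((continuousOn_jumpFn q).mono hTirr).domRestrict, fun A hA ↦ ?_⟩
  · rw [mk_image_eq Subtype.val_injective, hTcard]
  have hB : ¬(Subtype.val '' A).Countable := by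
    rw [← le_aleph0_iff_set_countable, mk_image_eq Subtype.val_injective, ← aleph_zero, not_le]
    exact hA
  obtain ⟨a, b, hab, hsub⟩ :=
    exists_Ioo_subset_closure_of_lusin hT (Subtype.coe_image_subset _ _) hB
  obtain ⟨r, hr⟩ := exists_rat_btwn hab
  obtain ⟨n, hn⟩ := (Denumerable.eqv ℚ).symm.surjective r
  have hqr : q n = r := congrArg Rat.cast hn
  exact not_uniformContinuousOn_domRestrict_of_jump (ε := (1 / 2) ^ n)
    (by positivity) (fun x y hx hy ↦ jumpFn_add_le q (hqr ▸ hx) (hqr ▸ hy.le))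
    (mem_closure_inter_Iio_of_Ioo_subset_closure hsub hr)
    (mem_closure_inter_Ioi_of_Ioo_subset_closure hsub hr)
end
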